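/- arXiv:math/9905166 — 4 statements merged into one kernel-verified Lean document; each statement's English description precedes it below -/
import Mathlib

section
/- Let B be an even unimodular ℤ-lattice, let V = (B ⊕ ℤ²) ⊗ ℝ with the real symmetric bilinear form φ extending the form of A := B(2) ⊕ II_{1,1}, and regard A as a full-rank lattice in (V, φ). Then there exists a full-rank lattice Â in (V, φ) which is isometric (with the restriction of φ) to B ⊕ I_{1,1}, such that every φ-isometry of V carrying A to A also carries Â to Â, and every φ-isometry of V carrying Â to Â also carries A to A. -/
open Matrix

/-- Gram matrix of the odd unimodular lattice `I_{p,m}`: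
diagonal with `p` entries `+1` and `m` entries `-1`. -/
def gramI (p m : ℕ) : Matrix (Fin (p + m)) (Fin (p + m)) ℤ :=
  Matrix.diagonal fun i => if (i : ℕ) < p then 1 else -1

/-- Gram matrix of the even unimodular lattice `II_{1,1}`. -/
def gramII : Matrix (Fin 2) (Fin 2) ℤ := !![0, 1; 1, 0]

/-- Gram matrix of the direct sum of two lattices. -/
def gramSum {n m : ℕ} (G : Matrix (Fin n) (Fin n) ℤ) (H : Matrix (Fin m) (Fin m) ℤ) :
    Matrix (Fin (n + m)) (Fin (n + m)) ℤ :=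
  Matrix.reindex finSumFinEquiv finSumFinEquiv (Matrix.fromBlocks G 0 0 H)

/-- A lattice (given by its Gram matrix) is even when every vector has even norm. -/
def EvenGram {n : ℕ} (G : Matrix (Fin n) (Fin n) ℤ) : Prop :=
  ∀ v : Fin n → ℤ, Even (v ⬝ᵥ G.mulVec v)

/-- A lattice (given by its Gram matrix) has signature `(p, m)` when its real extension is
equivalent to the diagonal form with `p` entries `+1` and `m` entries `-1`. -/
def HasSignature {n : ℕ} (G : Matrix (Fin n) (Fin n) ℤ) (p m : ℕ) : Prop :=
  n = p + m ∧ ∃ P : Matrix (Fin n) (Fin n) ℝ, IsUnit P.det ∧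
    Pᵀ * (G.map (Int.cast : ℤ → ℝ)) * P =
      Matrix.diagonal fun i : Fin n => if (i : ℕ) < p then 1 else -1
/-- The automorphism group of the lattice with Gram matrix `G`: invertible integer matrices
preserving the bilinear form. -/
def gramAut {n : ℕ} (G : Matrix (Fin n) (Fin n) ℤ) : Subgroup (Matrix (Fin n) (Fin n) ℤ)ˣ where
  carrier := {P | (P : Matrix (Fin n) (Fin n) ℤ)ᵀ * G * (P : Matrix (Fin n) (Fin n) ℤ) = G}
  one_mem' := by simp
  mul_mem' := by
    intro P Q hP hQ
    have hP' : (P : Matrix (Fin n) (Fin n) ℤ)ᵀ * G * (P : Matrix (Fin n) (Fin n) ℤ) = G := hP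
    have hQ' : (Q : Matrix (Fin n) (Fin n) ℤ)ᵀ * G * (Q : Matrix (Fin n) (Fin n) ℤ) = G := hQ
    show ((P * Q : (Matrix (Fin n) (Fin n) ℤ)ˣ) : Matrix (Fin n) (Fin n) ℤ)ᵀ * G *
        ((P * Q : (Matrix (Fin n) (Fin n) ℤ)ˣ) : Matrix (Fin n) (Fin n) ℤ) = G
    have hc : ((P * Q : (Matrix (Fin n) (Fin n) ℤ)ˣ) : Matrix (Fin n) (Fin n) ℤ) =
        (P : Matrix (Fin n) (Fin n) ℤ) * (Q : Matrix (Fin n) (Fin n) ℤ) := rfl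
    rw [hc, Matrix.transpose_mul]
    calc (Q : Matrix (Fin n) (Fin n) ℤ)ᵀ * (P : Matrix (Fin n) (Fin n) ℤ)ᵀ * G *
          ((P : Matrix (Fin n) (Fin n) ℤ) * (Q : Matrix (Fin n) (Fin n) ℤ))
        = (Q : Matrix (Fin n) (Fin n) ℤ)ᵀ *
            ((P : Matrix (Fin n) (Fin n) ℤ)ᵀ * G * (P : Matrix (Fin n) (Fin n) ℤ)) *
            (Q : Matrix (Fin n) (Fin n) ℤ) := by simp only [Matrix.mul_assoc]
      _ = G := by rw [hP', hQ']
  inv_mem' := by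
    intro P hP
    have hP' : (P : Matrix (Fin n) (Fin n) ℤ)ᵀ * G * (P : Matrix (Fin n) (Fin n) ℤ) = G := hP
    show ((P⁻¹ : (Matrix (Fin n) (Fin n) ℤ)ˣ) : Matrix (Fin n) (Fin n) ℤ)ᵀ * G *
        ((P⁻¹ : (Matrix (Fin n) (Fin n) ℤ)ˣ) : Matrix (Fin n) (Fin n) ℤ) = G
    calc ((P⁻¹ : (Matrix (Fin n) (Fin n) ℤ)ˣ) : Matrix (Fin n) (Fin n) ℤ)ᵀ * G *
          ((P⁻¹ : (Matrix (Fin n) (Fin n) ℤ)ˣ) : Matrix (Fin n) (Fin n) ℤ)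
        = ((P⁻¹ : (Matrix (Fin n) (Fin n) ℤ)ˣ) : Matrix (Fin n) (Fin n) ℤ)ᵀ *
            ((P : Matrix (Fin n) (Fin n) ℤ)ᵀ * G * (P : Matrix (Fin n) (Fin n) ℤ)) *
            ((P⁻¹ : (Matrix (Fin n) (Fin n) ℤ)ˣ) : Matrix (Fin n) (Fin n) ℤ) := by rw [hP']
      _ = ((P : Matrix (Fin n) (Fin n) ℤ) *
            ((P⁻¹ : (Matrix (Fin n) (Fin n) ℤ)ˣ) : Matrix (Fin n) (Fin n) ℤ))ᵀ * G *
            ((P : Matrix (Fin n) (Fin n) ℤ) *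
            ((P⁻¹ : (Matrix (Fin n) (Fin n) ℤ)ˣ) : Matrix (Fin n) (Fin n) ℤ)) := by
          simp only [Matrix.transpose_mul, Matrix.mul_assoc]
      _ = G := by rw [Units.mul_inv]; simp
/-- The real symmetric bilinear form on `Fin N → ℝ` with matrix `G`. -/
def gramBilinR {N : ℕ} (G : Matrix (Fin N) (Fin N) ℤ) :
    (Fin N → ℝ) →ₗ[ℝ] (Fin N → ℝ) →ₗ[ℝ] ℝ :=
  LinearMap.mk₂ ℝ (fun x y => x ⬝ᵥ (G.map (Int.cast : ℤ → ℝ)).mulVec y)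
    (fun x x' y => by simp only [add_dotProduct])
    (fun c x y => by simp only [smul_dotProduct])
    (fun x y y' => by simp only [Matrix.mulVec_add, dotProduct_add])
    (fun c x y => by simp only [Matrix.mulVec_smul, dotProduct_smul])

/-- `L` is a full-rank lattice in the real quadratic space `(V, φ)` whose Gram matrix in some
basis is the integer matrix `G`; i.e. `L` is (as a lattice with the restricted form)
a copy of the lattice with Gram matrix `G`. -/
def SpansWithGram {V : Type*} [AddCommGroup V] [Module ℝ V]
    (φ : V →ₗ[ℝ] V →ₗ[ℝ] ℝ) {n : ℕ} (L : Submodule ℤ V) (G : Matrix (Fin n) (Fin n) ℤ) : Prop :=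
  ∃ b : Module.Basis (Fin n) ℝ V, L = Submodule.span ℤ (Set.range ⇑b) ∧
    ∀ i j, φ (b i) (b j) = ((G i j : ℤ) : ℝ)

/-- The dual of a subset `S` of a real quadratic space: vectors pairing integrally with `S`. -/
def dualSet {V : Type*} [AddCommGroup V] [Module ℝ V]
    (φ : V →ₗ[ℝ] V →ₗ[ℝ] ℝ) (S : Set V) : Set V :=
  {x | ∀ y ∈ S, ∃ k : ℤ, φ x y = (k : ℝ)}

/-- `M` is an odd unimodular full-rank lattice in the real quadratic space `(V, φ)`. -/
def IsOddUnimodularLat {V : Type*} [AddCommGroup V] [Module ℝ V]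
    (φ : V →ₗ[ℝ] V →ₗ[ℝ] ℝ) (M : Submodule ℤ V) : Prop :=
  (∃ (m : ℕ) (H : Matrix (Fin m) (Fin m) ℤ), SpansWithGram φ M H ∧ IsUnit H.det) ∧
    ¬ ∀ x ∈ M, ∃ k : ℤ, φ x x = 2 * (k : ℝ)

/-- The standard integer lattice inside `Fin N → ℝ`. -/
def stdLat (N : ℕ) : Submodule ℤ (Fin N → ℝ) :=
  Submodule.span ℤ (Set.range fun i : Fin N => (Pi.single i (1 : ℝ) : Fin N → ℝ))

/-- Coordinatewise inclusion `ℤ^N → ℚ^N`. -/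
def intToRat (N : ℕ) : (Fin N → ℤ) →ₗ[ℤ] (Fin N → ℚ) where
  toFun x := fun i => (x i : ℚ)
  map_add' x y := by funext i; push_cast; simp
  map_smul' c x := by
    funext i
    simp only [Pi.smul_apply, smul_eq_mul, RingHom.id_apply, zsmul_eq_mul]
    push_cast
    ring

/-- The dual lattice of `ℤ^N` (with the form given by the Gram matrix `G`)
inside `ℚ^N`. -/
def ratDual {N : ℕ} (G : Matrix (Fin N) (Fin N) ℤ) : Submodule ℤ (Fin N → ℚ) where
  carrier := {x | ∀ y : Fin N → ℤ, ∃ k : ℤ,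
    x ⬝ᵥ (G.map (Int.cast : ℤ → ℚ)).mulVec (intToRat N y) = (k : ℚ)}
  zero_mem' := by intro y; exact ⟨0, by simp⟩
  add_mem' := by
    intro a b ha hb y
    obtain ⟨k, hk⟩ := ha y
    obtain ⟨l, hl⟩ := hb y
    exact ⟨k + l, by rw [add_dotProduct, hk, hl]; push_cast; ring⟩
  smul_mem' := by
    intro c x hx y
    obtain ⟨k, hk⟩ := hx y
    refine ⟨c * k, ?_⟩
    show (c • x) ⬝ᵥ _ = _
    rw [smul_dotProduct, hk, zsmul_eq_mul]
    push_cast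
    ring

/-- The set of vectors of `ℚ^N` pairing integrally with the sublattice `A` of `ℤ^N`,
with respect to the form with Gram matrix `G`. -/
def pairDual {N : ℕ} (G : Matrix (Fin N) (Fin N) ℤ) (A : Submodule ℤ (Fin N → ℤ)) :
    Submodule ℤ (Fin N → ℚ) where
  carrier := {x | ∀ y ∈ A, ∃ k : ℤ,
    x ⬝ᵥ (G.map (Int.cast : ℤ → ℚ)).mulVec (intToRat N y) = (k : ℚ)}
  zero_mem' := by intro y _; exact ⟨0, by simp⟩
  add_mem' := by
    intro a b ha hb y hy
    obtain ⟨k, hk⟩ := ha y hy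
    obtain ⟨l, hl⟩ := hb y hy
    exact ⟨k + l, by rw [add_dotProduct, hk, hl]; push_cast; ring⟩
  smul_mem' := by
    intro c x hx y hy
    obtain ⟨k, hk⟩ := hx y hy
    refine ⟨c * k, ?_⟩
    show (c • x) ⬝ᵥ _ = _
    rw [smul_dotProduct, hk, zsmul_eq_mul]
    push_cast
    ring

/-- The dual lattice `A*` of a sublattice `A` of `ℤ^N`, taken inside `A ⊗ ℚ`
(realized as the ℚ-span of `A` in `ℚ^N`), with respect to the form with Gram matrix `G`. -/
def relDual {N : ℕ} (G : Matrix (Fin N) (Fin N) ℤ) (A : Submodule ℤ (Fin N → ℤ)) :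
    Submodule ℤ (Fin N → ℚ) :=
  (Submodule.span ℚ (intToRat N '' (A : Set (Fin N → ℤ)))).restrictScalars ℤ ⊓ pairDual G A

/-- The orthogonal complement in `ℤ^N` (with Gram matrix `G`) of a sublattice `A`. -/
def perpSub {N : ℕ} (G : Matrix (Fin N) (Fin N) ℤ) (A : Submodule ℤ (Fin N → ℤ)) :
    Submodule ℤ (Fin N → ℤ) where
  carrier := {x | ∀ a ∈ A, x ⬝ᵥ G.mulVec a = 0}
  zero_mem' := by intro a _; simp
  add_mem' := by
    intro x y hx hy a ha
    rw [add_dotProduct, hx a ha, hy a ha, add_zero]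
  smul_mem' := by
    intro c x hx a ha
    show (c • x) ⬝ᵥ _ = 0
    rw [smul_dotProduct, hx a ha, smul_zero]

/-- A vector of a lattice is primitive if it is not a non-unit integer multiple. -/
def IsPrimVec {N : ℕ} (v : Fin N → ℤ) : Prop :=
  ∀ (k : ℤ) (w : Fin N → ℤ), v = k • w → IsUnit k

/-- A sublattice `A` of `ℤ^N` is primitive if the quotient is torsion-free. -/
def IsPrimSub {N : ℕ} (A : Submodule ℤ (Fin N → ℤ)) : Prop :=
  ∀ (x : Fin N → ℤ) (k : ℤ), k ≠ 0 → k • x ∈ A → x ∈ A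

/-- The quotient `A^⊥ / A` of `ℤ^N` (with Gram matrix `G`), with its induced bilinear form,
is isometric to the lattice with Gram matrix `H`: there is a surjection `π` from `A^⊥` with
kernel `A ∩ A^⊥` identifying the induced form with `H`. -/
def QuotIsometric {N m : ℕ} (G : Matrix (Fin N) (Fin N) ℤ) (A : Submodule ℤ (Fin N → ℤ))
    (H : Matrix (Fin m) (Fin m) ℤ) : Prop :=
  ∃ π : (perpSub G A) →ₗ[ℤ] (Fin m → ℤ), Function.Surjective π ∧
    (∀ x : perpSub G A, π x = 0 ↔ (x : Fin N → ℤ) ∈ A) ∧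
    (∀ x y : perpSub G A,
      (x : Fin N → ℤ) ⬝ᵥ G.mulVec (y : Fin N → ℤ) = π x ⬝ᵥ H.mulVec (π y))
namespace PL

variable {n : ℕ}

def emb (i : Fin n) : Fin (n + 2) := Fin.castAdd 2 i

def i0 : Fin (n + 2) := ⟨n, by omega⟩

def i1 : Fin (n + 2) := ⟨n + 1, by omega⟩

lemma i0_eq : (i0 : Fin (n + 2)) = Fin.natAdd n (0 : Fin 2) := rfl

lemma i1_eq : (i1 : Fin (n + 2)) = Fin.natAdd n (1 : Fin 2) := rfl

lemma emb_ne_i0 (i : Fin n) : emb i ≠ (i0 : Fin (n+2)) := by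
  simp [emb, i0, Fin.ext_iff, Fin.castAdd]; omega

lemma emb_ne_i1 (i : Fin n) : emb i ≠ (i1 : Fin (n+2)) := by
  simp [emb, i1, Fin.ext_iff, Fin.castAdd]; omega

lemma i0_ne_i1 : (i0 : Fin (n+2)) ≠ i1 := by
  simp [i0, i1, Fin.ext_iff]

lemma emb_inj : Function.Injective (emb : Fin n → Fin (n+2)) := by
  intro a b h; simpa [emb, Fin.ext_iff, Fin.castAdd] using h

lemma cases3 (j : Fin (n + 2)) : (∃ i : Fin n, j = emb i) ∨ j = i0 ∨ j = i1 := by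
  rcases lt_trichotomy (j : ℕ) n with h | h | h
  · exact Or.inl ⟨⟨j, h⟩, by simp [emb, Fin.ext_iff, Fin.castAdd]⟩
  · exact Or.inr (Or.inl (by simp [i0, Fin.ext_iff, h]))
  · refine Or.inr (Or.inr ?_)
    have : (j : ℕ) = n + 1 := by omega
    simp [i1, Fin.ext_iff, this]

section entries

variable {A : Matrix (Fin n) (Fin n) ℤ} {D : Matrix (Fin 2) (Fin 2) ℤ}

lemma gramSum_ee (i j : Fin n) : gramSum A D (emb i) (emb j) = A i j := by
  simp [gramSum, emb, Matrix.reindex_apply, Matrix.submatrix_apply]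

lemma gramSum_e0 (i : Fin n) : gramSum A D (emb i) i0 = 0 := by
  simp [gramSum, emb, i0_eq, Matrix.reindex_apply, Matrix.submatrix_apply]

lemma gramSum_e1 (i : Fin n) : gramSum A D (emb i) i1 = 0 := by
  simp [gramSum, emb, i1_eq, Matrix.reindex_apply, Matrix.submatrix_apply]

lemma gramSum_0e (j : Fin n) : gramSum A D i0 (emb j) = 0 := by
  simp [gramSum, emb, i0_eq, Matrix.reindex_apply, Matrix.submatrix_apply]

lemma gramSum_1e (j : Fin n) : gramSum A D i1 (emb j) = 0 := by
  simp [gramSum, emb, i1_eq, Matrix.reindex_apply, Matrix.submatrix_apply]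

lemma gramSum_00 : gramSum A D i0 i0 = D 0 0 := by
  simp [gramSum, i0_eq, Matrix.reindex_apply, Matrix.submatrix_apply]

lemma gramSum_01 : gramSum A D i0 i1 = D 0 1 := by
  simp [gramSum, i0_eq, i1_eq, Matrix.reindex_apply, Matrix.submatrix_apply]

lemma gramSum_10 : gramSum A D i1 i0 = D 1 0 := by
  simp [gramSum, i0_eq, i1_eq, Matrix.reindex_apply, Matrix.submatrix_apply]

lemma gramSum_11 : gramSum A D i1 i1 = D 1 1 := by
  simp [gramSum, i1_eq, Matrix.reindex_apply, Matrix.submatrix_apply]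

end entries

lemma sum_split {M : Type*} [AddCommMonoid M] (f : Fin (n + 2) → M) :
    ∑ j, f j = (∑ i : Fin n, f (emb i)) + f i0 + f i1 := by
  rw [Fin.sum_univ_castSucc, Fin.sum_univ_castSucc]
  have h1 : Fin.last (n+1) = (i1 : Fin (n+2)) := by simp [i1, Fin.ext_iff]
  have h0 : Fin.castSucc (Fin.last n) = (i0 : Fin (n+2)) := by simp [i0, Fin.ext_iff]
  rw [h1, h0]
  have he : ∀ i : Fin n, f i.castSucc.castSucc = f (emb i) := fun i => rfl
  simp [he]

end PL
namespace PL

variable {n : ℕ} (GB : Matrix (Fin n) (Fin n) ℤ)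

lemma gramII_00 : gramII 0 0 = 0 := rfl
lemma gramII_01 : gramII 0 1 = 1 := rfl
lemma gramII_10 : gramII 1 0 = 1 := rfl
lemma gramII_11 : gramII 1 1 = 0 := rfl

lemma phi_formula (x y : Fin (n+2) → ℝ) :
    gramBilinR (gramSum ((2:ℤ) • GB) gramII) x y =
      (∑ i, ∑ j, ((2 * GB i j : ℤ) : ℝ) * (x (emb i) * y (emb j)))
        + x i0 * y i1 + x i1 * y i0 := by
  show x ⬝ᵥ ((gramSum ((2:ℤ) • GB) gramII).map (Int.cast : ℤ → ℝ)).mulVec y = _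
  have hmv : ∀ j, ((gramSum ((2:ℤ) • GB) gramII).map (Int.cast : ℤ → ℝ)).mulVec y j
      = ∑ k, ((gramSum ((2:ℤ) • GB) gramII j k : ℤ) : ℝ) * y k := by
    intro j
    simp [Matrix.mulVec, dotProduct, Matrix.map_apply]
  rw [dotProduct, sum_split]
  have h0 : x i0 * (((gramSum ((2:ℤ) • GB) gramII).map (Int.cast : ℤ → ℝ)).mulVec y i0)
      = x i0 * y i1 := by
    rw [hmv, sum_split]
    simp [gramSum_0e, gramSum_00, gramSum_01, gramII_00, gramII_01]
  have h1 : x i1 * (((gramSum ((2:ℤ) • GB) gramII).map (Int.cast : ℤ → ℝ)).mulVec y i1)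
      = x i1 * y i0 := by
    rw [hmv, sum_split]
    simp [gramSum_1e, gramSum_10, gramSum_11, gramII_10, gramII_11]
  have he : ∀ i : Fin n,
      x (emb i) * (((gramSum ((2:ℤ) • GB) gramII).map (Int.cast : ℤ → ℝ)).mulVec y (emb i))
      = ∑ j, ((2 * GB i j : ℤ) : ℝ) * (x (emb i) * y (emb j)) := by
    intro i
    rw [hmv, sum_split]
    simp only [gramSum_ee, gramSum_e0, gramSum_e1, Matrix.smul_apply, smul_eq_mul,
      Int.cast_zero, zero_mul, add_zero, mul_zero]
    rw [Finset.mul_sum]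
    apply Finset.sum_congr rfl
    intro j _
    push_cast
    ring
  rw [h0, h1]
  congr 1
  congr 1
  apply Finset.sum_congr rfl
  intro i _
  exact he i

end PL
namespace PL

variable {n : ℕ}

noncomputable def dcol (j : Fin (n + 2)) : Fin (n + 2) → ℝ :=
  if (j : ℕ) < n then Pi.single j 1
  else if j = i0 then Pi.single (i0 : Fin (n+2)) 1 + Pi.single i1 1
  else Pi.single (i0 : Fin (n+2)) 1 - Pi.single i1 1

lemma dcol_emb (i : Fin n) : dcol (emb i) = Pi.single (emb i) (1:ℝ) := by
  have h : ((emb i : Fin (n+2)) : ℕ) < n := i.isLt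
  simp [dcol, h]

lemma dcol_i0 : (dcol i0 : Fin (n+2) → ℝ) = Pi.single (i0 : Fin (n+2)) 1 + Pi.single i1 1 := by
  simp [dcol, i0]

lemma dcol_i1 : (dcol i1 : Fin (n+2) → ℝ) = Pi.single (i0 : Fin (n+2)) 1 - Pi.single i1 1 := by
  have h1 : ¬ ((i1 : Fin (n+2)) : ℕ) < n := by simp [i1]
  have h2 : (i1 : Fin (n+2)) ≠ i0 := Ne.symm i0_ne_i1
  simp [dcol, h1, h2]

lemma dv00 : (dcol i0 : Fin (n+2) → ℝ) i0 = 1 := by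
  rw [dcol_i0]; simp [Pi.single_eq_of_ne i0_ne_i1]
lemma dv01 : (dcol i0 : Fin (n+2) → ℝ) i1 = 1 := by
  rw [dcol_i0]; simp [Pi.single_eq_of_ne (Ne.symm i0_ne_i1)]
lemma dv10 : (dcol i1 : Fin (n+2) → ℝ) i0 = 1 := by
  rw [dcol_i1]; simp [Pi.single_eq_of_ne i0_ne_i1]
lemma dv11 : (dcol i1 : Fin (n+2) → ℝ) i1 = -1 := by
  rw [dcol_i1]; simp [Pi.single_eq_of_ne (Ne.symm i0_ne_i1)]
lemma dv0e (i : Fin n) : (dcol i0 : Fin (n+2) → ℝ) (emb i) = 0 := by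
  rw [dcol_i0]
  simp [Pi.single_eq_of_ne (emb_ne_i0 i), Pi.single_eq_of_ne (emb_ne_i1 i)]
lemma dv1e (i : Fin n) : (dcol i1 : Fin (n+2) → ℝ) (emb i) = 0 := by
  rw [dcol_i1]
  simp [Pi.single_eq_of_ne (emb_ne_i0 i), Pi.single_eq_of_ne (emb_ne_i1 i)]
lemma dve0 (i : Fin n) : (dcol (emb i) : Fin (n+2) → ℝ) i0 = 0 := by
  rw [dcol_emb]; exact Pi.single_eq_of_ne (Ne.symm (emb_ne_i0 i)) 1
lemma dve1 (i : Fin n) : (dcol (emb i) : Fin (n+2) → ℝ) i1 = 0 := by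
  rw [dcol_emb]; exact Pi.single_eq_of_ne (Ne.symm (emb_ne_i1 i)) 1

noncomputable def latD : Submodule ℤ (Fin (n + 2) → ℝ) :=
  Submodule.span ℤ (Set.range (dcol : Fin (n+2) → (Fin (n+2) → ℝ)))

lemma eq_sum_single {N : ℕ} (y : Fin N → ℝ) (k : Fin N → ℤ) (hk : ∀ i, y i = (k i : ℝ)) :
    y = ∑ i, (k i) • Pi.single i (1:ℝ) := by
  have h : ∀ i : Fin N, (k i) • (Pi.single i (1:ℝ) : Fin N → ℝ)
      = (Pi.single i ((k i : ℝ)) : Fin N → ℝ) := by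
    intro i
    rw [← Pi.single_smul]
    norm_num
  simp only [h]
  rw [Finset.univ_sum_single (fun i => ((k i : ℝ)))]
  funext i
  exact hk i

lemma mem_stdLat_iff {N : ℕ} (x : Fin N → ℝ) :
    x ∈ stdLat N ↔ ∀ i, ∃ k : ℤ, x i = (k : ℝ) := by
  constructor
  · intro hx
    induction hx using Submodule.span_induction with
    | mem z hz =>
      obtain ⟨i, rfl⟩ := hz
      intro j
      by_cases h : j = i
      · subst h
        exact ⟨1, by simp⟩
      · exact ⟨0, by simp [Pi.single_eq_of_ne h]⟩
    | zero => exact fun i => ⟨0, by simp⟩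
    | add a b _ _ ha hb =>
      intro i
      obtain ⟨k, hk⟩ := ha i
      obtain ⟨l, hl⟩ := hb i
      exact ⟨k + l, by rw [Pi.add_apply, hk, hl]; push_cast; ring⟩
    | smul c a _ ha =>
      intro i
      obtain ⟨k, hk⟩ := ha i
      exact ⟨c * k, by rw [Pi.smul_apply, hk, zsmul_eq_mul]; push_cast; ring⟩
  · intro hx
    choose k hk using hx
    rw [eq_sum_single x k hk]
    exact Submodule.sum_mem _ fun i _ => Submodule.smul_mem _ _
      (Submodule.subset_span ⟨i, rfl⟩)

lemma latD_le_stdLat : (latD : Submodule ℤ (Fin (n+2) → ℝ)) ≤ stdLat (n+2) := by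
  rw [latD, Submodule.span_le]
  rintro z ⟨j, rfl⟩
  rw [SetLike.mem_coe, mem_stdLat_iff]
  intro m
  rcases cases3 j with ⟨i, rfl⟩ | rfl | rfl
  · rw [dcol_emb]
    by_cases h : m = emb i
    · subst h; exact ⟨1, by rw [Pi.single_eq_same]; norm_num⟩
    · exact ⟨0, by rw [Pi.single_eq_of_ne h]; norm_num⟩
  · rcases cases3 m with ⟨i, rfl⟩ | rfl | rfl
    · exact ⟨0, by rw [dv0e]; norm_num⟩
    · exact ⟨1, by rw [dv00]; norm_num⟩
    · exact ⟨1, by rw [dv01]; norm_num⟩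
  · rcases cases3 m with ⟨i, rfl⟩ | rfl | rfl
    · exact ⟨0, by rw [dv1e]; norm_num⟩
    · exact ⟨1, by rw [dv10]; norm_num⟩
    · exact ⟨-1, by rw [dv11]; norm_num⟩

lemma mem_latD_iff (x : Fin (n + 2) → ℝ) :
    x ∈ (latD : Submodule ℤ (Fin (n+2) → ℝ)) ↔
      (∀ i, ∃ k : ℤ, x i = (k : ℝ)) ∧ (∃ k : ℤ, x i0 + x i1 = 2 * (k : ℝ)) := by
  constructor
  · intro hx
    refine ⟨(mem_stdLat_iff x).mp (latD_le_stdLat hx), ?_⟩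
    induction hx using Submodule.span_induction with
    | mem z hz =>
      obtain ⟨j, rfl⟩ := hz
      rcases cases3 j with ⟨i, rfl⟩ | rfl | rfl
      · exact ⟨0, by rw [dve0, dve1]; norm_num⟩
      · exact ⟨1, by rw [dv00, dv01]; norm_num⟩
      · exact ⟨0, by rw [dv10, dv11]; norm_num⟩
    | zero => exact ⟨0, by simp⟩
    | add a b _ _ ha hb =>
      obtain ⟨ka, hka⟩ := ha
      obtain ⟨kb, hkb⟩ := hb
      refine ⟨ka + kb, ?_⟩
      show a i0 + b i0 + (a i1 + b i1) = _
      rw [show a i0 + b i0 + (a i1 + b i1) = (a i0 + a i1) + (b i0 + b i1) by ring,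
        hka, hkb]
      push_cast
      ring
    | smul c a _ ha =>
      obtain ⟨ka, hka⟩ := ha
      refine ⟨c * ka, ?_⟩
      show (c • a) i0 + (c • a) i1 = _
      rw [Pi.smul_apply, Pi.smul_apply, zsmul_eq_mul, zsmul_eq_mul,
        show (c:ℝ) * a i0 + (c:ℝ) * a i1 = (c:ℝ) * (a i0 + a i1) by ring, hka]
      push_cast
      ring
  · rintro ⟨h1, m, hm⟩
    choose k hk using h1
    have hki : ((k i0 : ℝ)) + ((k i1 : ℝ)) = 2 * (m : ℝ) := by
      rw [← hk, ← hk]; exact hm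
    set y : Fin (n+2) → ℝ := x - m • dcol i0 - (k i0 - m) • dcol i1 with hy
    have hyj : ∀ j, y j = x j - (m : ℝ) * (dcol i0 j) - ((k i0 - m : ℤ) : ℝ) * (dcol i1 j) := by
      intro j
      rw [hy]
      show x j - m • (dcol i0 j) - (k i0 - m) • (dcol i1 j) = _
      rw [zsmul_eq_mul, zsmul_eq_mul]
    set kk : Fin (n+2) → ℤ := fun j => if j = i0 then 0 else if j = i1 then 0 else k j with hkk
    have hkke : ∀ i : Fin n, kk (emb i) = k (emb i) := by
      intro i; simp [hkk, emb_ne_i0 i, emb_ne_i1 i]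
    have hkk0 : kk i0 = 0 := by simp [hkk]
    have hkk1 : kk i1 = 0 := by simp [hkk, i0_ne_i1, Ne.symm i0_ne_i1]
    have hyc : ∀ j, y j = (kk j : ℝ) := by
      intro j
      rcases cases3 j with ⟨i, rfl⟩ | rfl | rfl
      · rw [hkke, hyj, dv0e, dv1e, hk (emb i)]; ring
      · rw [hkk0, hyj, dv00, dv10, hk (i0 : Fin (n+2))]; push_cast; ring
      · rw [hkk1, hyj, dv01, dv11, hk (i1 : Fin (n+2))]
        push_cast
        push_cast at hki
        linarith [hki]
    have hymem : y ∈ (latD : Submodule ℤ (Fin (n+2) → ℝ)) := by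
      rw [eq_sum_single y kk hyc]
      refine Submodule.sum_mem _ fun j _ => ?_
      rcases cases3 j with ⟨i, rfl⟩ | rfl | rfl
      · refine Submodule.smul_mem _ _ ?_
        rw [← dcol_emb]
        exact Submodule.subset_span ⟨emb i, rfl⟩
      · rw [hkk0, zero_smul]; exact Submodule.zero_mem _
      · rw [hkk1, zero_smul]; exact Submodule.zero_mem _
    have hxy : x = y + m • dcol i0 + (k i0 - m) • dcol i1 := by rw [hy]; abel
    rw [hxy]
    exact Submodule.add_mem _ (Submodule.add_mem _ hymem
      (Submodule.smul_mem _ _ (Submodule.subset_span ⟨i0, rfl⟩)))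
      (Submodule.smul_mem _ _ (Submodule.subset_span ⟨i1, rfl⟩))

end PL
namespace PL

variable {n : ℕ} (GB : Matrix (Fin n) (Fin n) ℤ)

noncomputable abbrev phiG : (Fin (n+2) → ℝ) →ₗ[ℝ] (Fin (n+2) → ℝ) →ₗ[ℝ] ℝ :=
  gramBilinR (gramSum ((2:ℤ) • GB) gramII)

lemma phi_int (c d : Fin (n+2) → ℤ) :
    phiG GB (fun j => ((c j : ℤ) : ℝ)) (fun j => ((d j : ℤ) : ℝ))
      = ((2 * ((c ∘ emb) ⬝ᵥ GB.mulVec (d ∘ emb)) + c i0 * d i1 + c i1 * d i0 : ℤ) : ℝ) := by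
  rw [phi_formula]
  have hz : (2 * ((c ∘ emb) ⬝ᵥ GB.mulVec (d ∘ emb)) : ℤ)
      = ∑ i, ∑ j, 2 * GB i j * c (emb i) * d (emb j) := by
    rw [dotProduct, Finset.mul_sum]
    apply Finset.sum_congr rfl
    intro i _
    rw [Matrix.mulVec, dotProduct, Finset.mul_sum, Finset.mul_sum]
    apply Finset.sum_congr rfl
    intro j _
    simp only [Function.comp_apply]
    ring
  have h1 : ∀ i j, ((2 * GB i j : ℤ) : ℝ) * (((c (emb i) : ℤ):ℝ) * ((d (emb j) : ℤ):ℝ))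
      = ((2 * GB i j * c (emb i) * d (emb j) : ℤ) : ℝ) := by
    intro i j; push_cast; ring
  simp only [h1, ← Int.cast_sum]
  push_cast [← hz]
  ring

lemma phi_int_self_even (heven : EvenGram GB) (d : Fin (n+2) → ℤ) :
    ∃ q : ℤ, phiG GB (fun j => ((d j : ℤ) : ℝ)) (fun j => ((d j : ℤ) : ℝ))
      = ((4 * q + 2 * (d i0 * d i1) : ℤ) : ℝ) := by
  obtain ⟨q, hq⟩ := heven (d ∘ emb)
  refine ⟨q, ?_⟩
  rw [phi_int]
  congr 1
  rw [hq]
  ring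

lemma keyEven (c0 c1 d0 d1 m l : ℤ) (h : c0 + c1 = 2*m) (hd : d0*d1 = 2*l+1) :
    ∃ e, c0*d1 + c1*d0 = 2*e := by
  have hodd : Odd (d0 * d1) := ⟨l, by omega⟩
  obtain ⟨⟨a, ha⟩, ⟨b, hb⟩⟩ := Int.odd_mul.mp hodd
  have hc1 : c1 = 2*m - c0 := by omega
  exact ⟨c0*b + m*(2*a+1) - a*c0, by rw [ha, hb, hc1]; ring⟩

lemma keyEven2 (c0 c1 a b : ℤ) (h1 : c0*c1 = 2*a) (h2 : c0+c1 = 2*b) :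
    ∃ u v, c0 = 2*u ∧ c1 = 2*v := by
  rcases Int.even_or_odd c0 with ⟨u, hu⟩ | ⟨u, hu⟩
  · rcases Int.even_or_odd c1 with ⟨v, hv⟩ | ⟨v, hv⟩
    · exact ⟨u, v, by omega, by omega⟩
    · exfalso; omega
  · exfalso
    have hc1 : Odd c1 := ⟨b - u - 1, by omega⟩
    have : Odd (c0 * c1) := Odd.mul ⟨u, by omega⟩ hc1
    obtain ⟨w, hw⟩ := this
    omega

/-- characterization of `latD` by parity pairing inside `stdLat`. -/
lemma char1 (heven : EvenGram GB) (x : Fin (n+2) → ℝ) :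
    x ∈ (latD : Submodule ℤ (Fin (n+2) → ℝ)) ↔
      x ∈ stdLat (n+2) ∧ ∀ z ∈ stdLat (n+2),
        (∃ k : ℤ, phiG GB z z = 4*(k:ℝ)+2) → (∃ k : ℤ, phiG GB x z = 2*(k:ℝ)) := by
  constructor
  · intro hx
    obtain ⟨h1, m, hm⟩ := (mem_latD_iff x).mp hx
    refine ⟨latD_le_stdLat hx, ?_⟩
    intro z hz hq
    choose c hc using h1
    choose d hd using (mem_stdLat_iff z).mp hz
    have hxe : x = fun j => ((c j : ℤ) : ℝ) := funext hc
    have hze : z = fun j => ((d j : ℤ) : ℝ) := funext hd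
    obtain ⟨k, hk⟩ := hq
    obtain ⟨q, hq2⟩ := phi_int_self_even GB heven d
    rw [hze, hq2] at hk
    have hkz : 4 * q + 2 * (d i0 * d i1) = 4 * k + 2 := by
      have : ((4 * q + 2 * (d i0 * d i1) : ℤ) : ℝ) = ((4 * k + 2 : ℤ) : ℝ) := by
        rw [hk]; push_cast; ring
      exact_mod_cast this
    have hdodd : d i0 * d i1 = 2*(k - q) + 1 := by omega
    have hcpar : c i0 + c i1 = 2 * m := by
      have : ((c i0 + c i1 : ℤ) : ℝ) = ((2*m : ℤ) : ℝ) := by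
        push_cast
        rw [← hc, ← hc]
        exact hm
      exact_mod_cast this
    obtain ⟨e, he⟩ := keyEven (c i0) (c i1) (d i0) (d i1) m (k - q) hcpar hdodd
    refine ⟨(c ∘ emb) ⬝ᵥ GB.mulVec (d ∘ emb) + e, ?_⟩
    rw [hxe, hze, phi_int]
    have : 2 * ((c ∘ emb) ⬝ᵥ GB.mulVec (d ∘ emb)) + c i0 * d i1 + c i1 * d i0
        = 2 * ((c ∘ emb) ⬝ᵥ GB.mulVec (d ∘ emb) + e) := by
      rw [mul_add, ← he]; ring
    rw [this]; push_cast; ring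
  · rintro ⟨hstd, hpair⟩
    choose c hc using (mem_stdLat_iff x).mp hstd
    set d : Fin (n+2) → ℤ := fun j => if j = i0 then 1 else if j = i1 then 1 else 0 with hdd
    have hd0 : d i0 = 1 := by simp [hdd]
    have hd1 : d i1 = 1 := by simp [hdd, i0_ne_i1, Ne.symm i0_ne_i1]
    have hde : ∀ i : Fin n, d (emb i) = 0 := by
      intro i; simp [hdd, emb_ne_i0 i, emb_ne_i1 i]
    set z : Fin (n+2) → ℝ := fun j => ((d j : ℤ) : ℝ) with hzz
    have hzmem : z ∈ stdLat (n+2) := (mem_stdLat_iff z).mpr fun j => ⟨d j, rfl⟩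
    have hdemb : (d ∘ emb : Fin n → ℤ) = 0 := by funext i; exact hde i
    have hzq : phiG GB z z = 4*((0:ℤ):ℝ)+2 := by
      rw [hzz, phi_int, hdemb]
      simp [hd0, hd1]
    obtain ⟨k, hk⟩ := hpair z hzmem ⟨0, hzq⟩
    have hxe : x = fun j => ((c j : ℤ) : ℝ) := funext hc
    rw [hxe, hzz, phi_int, hdemb] at hk
    simp only [Matrix.mulVec_zero, dotProduct_zero, mul_zero, zero_add, hd0, hd1,
      mul_one] at hk
    have hkz : c i0 + c i1 = 2 * k := by exact_mod_cast hk
    refine (mem_latD_iff x).mpr ⟨fun j => ⟨c j, hc j⟩, ⟨k, ?_⟩⟩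
    rw [hc, hc]
    exact_mod_cast hkz

/-- characterization of `stdLat` by parity pairing against `latD`. -/
lemma char2 (heven : EvenGram GB) (hunim : IsUnit GB.det) (y : Fin (n+2) → ℝ) :
    y ∈ stdLat (n+2) ↔ ∀ x ∈ (latD : Submodule ℤ (Fin (n+2) → ℝ)),
        (∃ k : ℤ, phiG GB x x = 4*(k:ℝ)) → (∃ k : ℤ, phiG GB y x = 2*(k:ℝ)) := by
  constructor
  · intro hy x hx hq
    choose mm hmm using (mem_stdLat_iff y).mp hy
    obtain ⟨h1, p, hp⟩ := (mem_latD_iff x).mp hx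
    choose c hc using h1
    have hxe : x = fun j => ((c j : ℤ) : ℝ) := funext hc
    have hye : y = fun j => ((mm j : ℤ) : ℝ) := funext hmm
    obtain ⟨k, hk⟩ := hq
    obtain ⟨q, hq2⟩ := phi_int_self_even GB heven c
    rw [hxe, hq2] at hk
    have hkz : 4 * q + 2 * (c i0 * c i1) = 4 * k := by
      have : ((4 * q + 2 * (c i0 * c i1) : ℤ) : ℝ) = ((4 * k : ℤ) : ℝ) := by
        rw [hk]; push_cast; ring
      exact_mod_cast this
    have hceven : c i0 * c i1 = 2 * (k - q) := by omega
    have hcpar : c i0 + c i1 = 2 * p := by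
      have : ((c i0 + c i1 : ℤ) : ℝ) = ((2*p : ℤ) : ℝ) := by
        push_cast
        rw [← hc, ← hc]
        exact hp
      exact_mod_cast this
    obtain ⟨u, v, hu, hv⟩ := keyEven2 (c i0) (c i1) (k - q) p hceven hcpar
    refine ⟨(mm ∘ emb) ⬝ᵥ GB.mulVec (c ∘ emb) + mm i0 * v + mm i1 * u, ?_⟩
    rw [hye, hxe, phi_int]
    have : 2 * ((mm ∘ emb) ⬝ᵥ GB.mulVec (c ∘ emb)) + mm i0 * c i1 + mm i1 * c i0
        = 2 * ((mm ∘ emb) ⬝ᵥ GB.mulVec (c ∘ emb) + mm i0 * v + mm i1 * u) := by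
      rw [hu, hv]; ring
    rw [this]; push_cast; ring
  · intro hy
    rw [mem_stdLat_iff]
    -- value at i0
    have val0 : ∃ k : ℤ, y i0 = (k : ℝ) := by
      set c : Fin (n+2) → ℤ := fun j => if j = i1 then 2 else 0 with hcc
      set x : Fin (n+2) → ℝ := fun j => ((c j : ℤ) : ℝ) with hxx
      have hc0 : c i0 = 0 := by simp [hcc, i0_ne_i1]
      have hc1 : c i1 = 2 := by simp [hcc]
      have hce : ∀ i : Fin n, c (emb i) = 0 := fun i => by simp [hcc, emb_ne_i1 i]
      have hcemb : (c ∘ emb : Fin n → ℤ) = 0 := funext hce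
      have hxmem : x ∈ (latD : Submodule ℤ (Fin (n+2) → ℝ)) := by
        refine (mem_latD_iff x).mpr ⟨fun j => ⟨c j, rfl⟩, ⟨1, ?_⟩⟩
        show ((c i0 : ℤ):ℝ) + ((c i1 : ℤ):ℝ) = _
        rw [hc0, hc1]; norm_num
      have hxq : phiG GB x x = 4*((0:ℤ):ℝ) := by
        rw [hxx, phi_int, hcemb]
        simp [hc0, hc1]
      obtain ⟨k, hk⟩ := hy x hxmem ⟨0, hxq⟩
      rw [phi_formula] at hk
      have hz1 : ∀ i : Fin n, x (emb i) = 0 := by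
        intro i; rw [hxx]; show ((c (emb i) : ℤ):ℝ) = 0; rw [hce i]; norm_num
      have hx0 : x i0 = 0 := by rw [hxx]; show ((c i0 : ℤ):ℝ) = 0; rw [hc0]; norm_num
      have hx1 : x i1 = 2 := by rw [hxx]; show ((c i1 : ℤ):ℝ) = 2; rw [hc1]; norm_num
      simp only [hz1, hx0, hx1, mul_zero, zero_mul, Finset.sum_const_zero, add_zero,
        zero_add, mul_zero] at hk
      exact ⟨k, by linarith [hk]⟩
    -- value at i1
    have val1 : ∃ k : ℤ, y i1 = (k : ℝ) := by
      set c : Fin (n+2) → ℤ := fun j => if j = i0 then 2 else 0 with hcc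
      set x : Fin (n+2) → ℝ := fun j => ((c j : ℤ) : ℝ) with hxx
      have hc0 : c i0 = 2 := by simp [hcc]
      have hc1 : c i1 = 0 := by simp [hcc, Ne.symm i0_ne_i1]
      have hce : ∀ i : Fin n, c (emb i) = 0 := fun i => by simp [hcc, emb_ne_i0 i]
      have hcemb : (c ∘ emb : Fin n → ℤ) = 0 := funext hce
      have hxmem : x ∈ (latD : Submodule ℤ (Fin (n+2) → ℝ)) := by
        refine (mem_latD_iff x).mpr ⟨fun j => ⟨c j, rfl⟩, ⟨1, ?_⟩⟩
        show ((c i0 : ℤ):ℝ) + ((c i1 : ℤ):ℝ) = _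
        rw [hc0, hc1]; norm_num
      have hxq : phiG GB x x = 4*((0:ℤ):ℝ) := by
        rw [hxx, phi_int, hcemb]
        simp [hc0, hc1]
      obtain ⟨k, hk⟩ := hy x hxmem ⟨0, hxq⟩
      rw [phi_formula] at hk
      have hz1 : ∀ i : Fin n, x (emb i) = 0 := by
        intro i; rw [hxx]; show ((c (emb i) : ℤ):ℝ) = 0; rw [hce i]; norm_num
      have hx0 : x i0 = 2 := by rw [hxx]; show ((c i0 : ℤ):ℝ) = 2; rw [hc0]; norm_num
      have hx1 : x i1 = 0 := by rw [hxx]; show ((c i1 : ℤ):ℝ) = 0; rw [hc1]; norm_num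
      simp only [hz1, hx0, hx1, mul_zero, zero_mul, Finset.sum_const_zero, add_zero,
        zero_add, mul_zero] at hk
      exact ⟨k, by linarith [hk]⟩
    -- values at emb
    have vale : ∀ i : Fin n, ∃ k : ℤ, y (emb i) = (k : ℝ) := by
      have hrow : ∀ i : Fin n, ∃ w : ℤ, ∑ i', y (emb i') * ((GB i' i : ℤ) : ℝ) = (w : ℝ) := by
        intro i
        set c : Fin (n+2) → ℤ := fun j => if j = emb i then 1 else 0 with hcc
        set x : Fin (n+2) → ℝ := fun j => ((c j : ℤ) : ℝ) with hxx
        have hc0 : c i0 = 0 := by simp [hcc, Ne.symm (emb_ne_i0 i)]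
        have hc1 : c i1 = 0 := by simp [hcc, Ne.symm (emb_ne_i1 i)]
        have hce : ∀ i' : Fin n, c (emb i') = if i' = i then 1 else 0 := by
          intro i'
          simp only [hcc]
          by_cases h : i' = i
          · subst h; simp
          · rw [if_neg (fun he => h (emb_inj he)), if_neg h]
        have hcemb : (c ∘ emb : Fin n → ℤ) = Pi.single i 1 := by
          funext i'
          rw [Function.comp_apply, hce i', Pi.single_apply]
        have hxmem : x ∈ (latD : Submodule ℤ (Fin (n+2) → ℝ)) := by
          refine (mem_latD_iff x).mpr ⟨fun j => ⟨c j, rfl⟩, ⟨0, ?_⟩⟩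
          show ((c i0 : ℤ):ℝ) + ((c i1 : ℤ):ℝ) = _
          rw [hc0, hc1]; norm_num
        have hdiag : (Pi.single i 1 : Fin n → ℤ) ⬝ᵥ GB.mulVec (Pi.single i 1) = GB i i := by
          rw [Matrix.mulVec_single]
          simp [dotProduct, Pi.single_apply, Finset.sum_ite_eq']
        obtain ⟨t, ht⟩ := heven (Pi.single i 1 : Fin n → ℤ)
        rw [hdiag] at ht
        have hxq : phiG GB x x = 4*((t:ℤ):ℝ) := by
          rw [hxx, phi_int, hcemb, hdiag]
          rw [hc0, hc1]
          have : (2 * GB i i + 0 * 0 + 0 * 0 : ℤ) = 4 * t := by omega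
          rw [this]; push_cast; ring
        obtain ⟨k, hk⟩ := hy x hxmem ⟨t, hxq⟩
        rw [phi_formula] at hk
        have hx0 : x i0 = 0 := by rw [hxx]; show ((c i0 : ℤ):ℝ) = 0; rw [hc0]; norm_num
        have hx1 : x i1 = 0 := by rw [hxx]; show ((c i1 : ℤ):ℝ) = 0; rw [hc1]; norm_num
        have hxej : ∀ j : Fin n, x (emb j) = if j = i then 1 else 0 := by
          intro j
          rw [hxx]
          show ((c (emb j) : ℤ):ℝ) = _
          rw [hce j]
          split <;> norm_num
        have hsum : ∀ i' : Fin n,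
            (∑ j, ((2 * GB i' j : ℤ) : ℝ) * (y (emb i') * x (emb j)))
              = 2 * (y (emb i') * ((GB i' i : ℤ):ℝ)) := by
          intro i'
          have : ∀ j : Fin n, ((2 * GB i' j : ℤ) : ℝ) * (y (emb i') * x (emb j))
              = if j = i then 2 * (y (emb i') * ((GB i' j : ℤ):ℝ)) else 0 := by
            intro j
            rw [hxej j]
            split
            · push_cast; ring
            · ring
          simp only [this]
          rw [Finset.sum_ite_eq' Finset.univ i]
          simp
        simp only [hsum, hx0, hx1, mul_zero, zero_mul, add_zero] at hk
        rw [← Finset.mul_sum] at hk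
        exact ⟨k, by linarith [hk]⟩
      choose w hw using hrow
      have hGB : Invertible GB := GB.invertibleOfIsUnitDet hunim
      set GBi := ⅟GB with hGBi
      have hmul : GB * GBi = 1 := mul_invOf_self GB
      intro i
      refine ⟨∑ i', w i' * GBi i' i, ?_⟩
      have expand : ∀ i'', y (emb i'') = ∑ i', (∑ j, y (emb j) * ((GB j i' : ℤ):ℝ)) * ((GBi i' i'' : ℤ):ℝ) := by
        intro i''
        have hone : ∀ j, (∑ i', ((GB j i' : ℤ):ℝ) * ((GBi i' i'' : ℤ):ℝ))
            = if j = i'' then 1 else 0 := by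
          intro j
          have h1 : (∑ i', (GB j i' * GBi i' i'' : ℤ)) = (GB * GBi) j i'' := by
            rw [Matrix.mul_apply]
          have h2 : (GB * GBi) j i'' = if j = i'' then 1 else 0 := by
            rw [hmul, Matrix.one_apply]
          calc (∑ i', ((GB j i' : ℤ):ℝ) * ((GBi i' i'' : ℤ):ℝ))
              = (((∑ i', (GB j i' * GBi i' i'' : ℤ)) : ℤ) : ℝ) := by
                rw [Int.cast_sum]
                apply Finset.sum_congr rfl
                intro i' _
                push_cast; ring
            _ = if j = i'' then 1 else 0 := by
                rw [h1, h2]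
                split <;> norm_num
        have main : (∑ i', (∑ j, y (emb j) * ((GB j i' : ℤ):ℝ)) * ((GBi i' i'' : ℤ):ℝ))
            = y (emb i'') := by
          calc ∑ i', (∑ j, y (emb j) * ((GB j i' : ℤ):ℝ)) * ((GBi i' i'' : ℤ):ℝ)
              = ∑ i', ∑ j, y (emb j) * (((GB j i' : ℤ):ℝ) * ((GBi i' i'' : ℤ):ℝ)) := by
                apply Finset.sum_congr rfl
                intro i' _
                rw [Finset.sum_mul]
                apply Finset.sum_congr rfl
                intro j _
                ring
            _ = ∑ j, ∑ i', y (emb j) * (((GB j i' : ℤ):ℝ) * ((GBi i' i'' : ℤ):ℝ)) :=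
                Finset.sum_comm
            _ = ∑ j, y (emb j) * (∑ i', ((GB j i' : ℤ):ℝ) * ((GBi i' i'' : ℤ):ℝ)) := by
                apply Finset.sum_congr rfl
                intro j _
                rw [Finset.mul_sum]
            _ = ∑ j, y (emb j) * (if j = i'' then 1 else 0) := by
                apply Finset.sum_congr rfl
                intro j _
                rw [hone j]
            _ = y (emb i'') := by
                simp only [mul_ite, mul_one, mul_zero]
                rw [Finset.sum_ite_eq' Finset.univ i'']
                simp
        exact main.symm
      rw [expand i]
      rw [Int.cast_sum]
      apply Finset.sum_congr rfl
      intro i' _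
      rw [hw i']
      push_cast; ring
    intro j
    rcases cases3 j with ⟨i, rfl⟩ | rfl | rfl
    · exact vale i
    · exact val0
    · exact val1

end PL
namespace PL

variable {n : ℕ}

noncomputable def Tfun (x : Fin (n+2) → ℝ) : Fin (n+2) → ℝ := ∑ j, x j • dcol j

lemma Tfun_apply (x : Fin (n+2) → ℝ) (m : Fin (n+2)) :
    Tfun x m = (∑ i : Fin n, x (emb i) * dcol (emb i) m) + x i0 * dcol i0 m
      + x i1 * dcol i1 m := by
  have h : Tfun x m = ∑ j, x j * dcol j m := by
    rw [Tfun, Finset.sum_apply]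
    apply Finset.sum_congr rfl
    intro j _
    rw [Pi.smul_apply, smul_eq_mul]
  rw [h, sum_split (fun j => x j * dcol j m)]

lemma Tfun_e (x : Fin (n+2) → ℝ) (i : Fin n) : Tfun x (emb i) = x (emb i) := by
  rw [Tfun_apply, dv0e, dv1e]
  have h : ∀ i' : Fin n, x (emb i') * dcol (emb i') (emb i)
      = if i = i' then x (emb i') else 0 := by
    intro i'
    rw [dcol_emb, Pi.single_apply]
    by_cases hij : i = i'
    · subst hij; simp
    · rw [if_neg (fun h => hij (emb_inj h)), if_neg hij, mul_zero]
  simp only [h]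
  rw [Finset.sum_ite_eq Finset.univ i]
  simp

lemma Tfun_0 (x : Fin (n+2) → ℝ) : Tfun x i0 = x i0 + x i1 := by
  rw [Tfun_apply, dv00, dv10]
  have h : ∀ i' : Fin n, x (emb i') * dcol (emb i') i0 = 0 := by
    intro i'; rw [dve0, mul_zero]
  simp only [h]
  simp

lemma Tfun_1 (x : Fin (n+2) → ℝ) : Tfun x i1 = x i0 - x i1 := by
  rw [Tfun_apply, dv01, dv11]
  have h : ∀ i' : Fin n, x (emb i') * dcol (emb i') i1 = 0 := by
    intro i'; rw [dve1, mul_zero]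
  simp only [h]
  simp
  ring

noncomputable def Teqv : (Fin (n+2) → ℝ) ≃ₗ[ℝ] (Fin (n+2) → ℝ) where
  toFun := Tfun
  map_add' x y := by
    show Tfun (x + y) = Tfun x + Tfun y
    funext m
    show Tfun (x+y) m = Tfun x m + Tfun y m
    simp only [Tfun_apply, Pi.add_apply, add_mul]
    rw [Finset.sum_add_distrib]
    ring
  map_smul' c x := by
    show Tfun (c • x) = c • Tfun x
    funext m
    show Tfun (c • x) m = c * Tfun x m
    simp only [Tfun_apply, Pi.smul_apply, smul_eq_mul]
    have h : ∀ i : Fin n, c * x (emb i) * dcol (emb i) m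
        = c * (x (emb i) * dcol (emb i) m) := fun i => by ring
    simp only [h, ← Finset.mul_sum]
    ring
  invFun y := fun m => if (m : ℕ) < n then y m
    else if m = i0 then (y i0 + y i1)/2 else (y i0 - y i1)/2
  left_inv x := by
    funext m
    rcases cases3 m with ⟨i, rfl⟩ | rfl | rfl
    · have h : ((emb i : Fin (n+2)) : ℕ) < n := i.isLt
      beta_reduce
      rw [if_pos h]
      exact Tfun_e x i
    · have h : ¬ ((i0 : Fin (n+2)) : ℕ) < n := by simp [i0]
      beta_reduce
      rw [if_neg h, if_pos rfl]
      show (Tfun x i0 + Tfun x i1)/2 = x i0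
      rw [Tfun_0, Tfun_1]
      ring
    · have h : ¬ ((i1 : Fin (n+2)) : ℕ) < n := by simp [i1]
      have h2 : (i1 : Fin (n+2)) ≠ i0 := Ne.symm i0_ne_i1
      beta_reduce
      rw [if_neg h, if_neg h2]
      show (Tfun x i0 - Tfun x i1)/2 = x i1
      rw [Tfun_0, Tfun_1]
      ring
  right_inv y := by
    have key : ∀ (S : Fin (n+2) → ℝ), (∀ i : Fin n, S (emb i) = y (emb i)) →
        S i0 = (y i0 + y i1)/2 → S i1 = (y i0 - y i1)/2 → Tfun S = y := by
      intro S hSe hS0 hS1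
      funext m
      rcases cases3 m with ⟨i, rfl⟩ | rfl | rfl
      · rw [Tfun_e, hSe]
      · rw [Tfun_0, hS0, hS1]; ring
      · rw [Tfun_1, hS0, hS1]; ring
    exact key _ (fun i => if_pos i.isLt)
      (by beta_reduce
          rw [if_neg (by simp [i0] : ¬ ((i0 : Fin (n+2)) : ℕ) < n), if_pos rfl])
      (by beta_reduce
          rw [if_neg (by simp [i1] : ¬ ((i1 : Fin (n+2)) : ℕ) < n),
            if_neg (Ne.symm i0_ne_i1)])

lemma Teqv_single (j : Fin (n+2)) : Teqv (Pi.single j (1:ℝ)) = dcol j := by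
  show Tfun (Pi.single j 1) = dcol j
  funext m
  rcases cases3 j with ⟨i, rfl⟩ | rfl | rfl
  all_goals rcases cases3 m with ⟨i', rfl⟩ | rfl | rfl
  · rw [Tfun_e]
    rw [dcol_emb]
  · rw [Tfun_0, Pi.single_eq_of_ne (Ne.symm (emb_ne_i0 i)),
      Pi.single_eq_of_ne (Ne.symm (emb_ne_i1 i)), dve0]
    norm_num
  · rw [Tfun_1, Pi.single_eq_of_ne (Ne.symm (emb_ne_i0 i)),
      Pi.single_eq_of_ne (Ne.symm (emb_ne_i1 i)), dve1]
    norm_num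
  · rw [Tfun_e, Pi.single_eq_of_ne (emb_ne_i0 i'), dv0e]
  · rw [Tfun_0, Pi.single_eq_same, Pi.single_eq_of_ne (Ne.symm i0_ne_i1), dv00]
    norm_num
  · rw [Tfun_1, Pi.single_eq_same, Pi.single_eq_of_ne (Ne.symm i0_ne_i1), dv01]
    norm_num
  · rw [Tfun_e, Pi.single_eq_of_ne (emb_ne_i1 i'), dv1e]
  · rw [Tfun_0, Pi.single_eq_same, Pi.single_eq_of_ne i0_ne_i1, dv10]
    norm_num
  · rw [Tfun_1, Pi.single_eq_same, Pi.single_eq_of_ne i0_ne_i1, dv11]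
    norm_num

noncomputable def cc : ℝ := Real.sqrt 2 / 2

lemma cc_ne : (cc : ℝ) ≠ 0 := by
  have : Real.sqrt 2 > 0 := Real.sqrt_pos.mpr (by norm_num)
  rw [cc]
  positivity

lemma cc_sq : (cc : ℝ) * cc = 1/2 := by
  rw [cc]
  rw [div_mul_div_comm, Real.mul_self_sqrt (by norm_num : (2:ℝ) ≥ 0)]
  norm_num

noncomputable def bigBasis : Module.Basis (Fin (n+2)) ℝ (Fin (n+2) → ℝ) :=
  (Pi.basisFun ℝ (Fin (n+2))).map
    (Teqv.trans (LinearEquiv.smulOfNeZero ℝ (Fin (n+2) → ℝ) cc cc_ne))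

lemma bigBasis_apply (j : Fin (n+2)) :
    (bigBasis : Module.Basis (Fin (n+2)) ℝ (Fin (n+2) → ℝ)) j = cc • dcol j := by
  rw [bigBasis, Module.Basis.map_apply]
  have h : (Pi.basisFun ℝ (Fin (n+2))) j = Pi.single j 1 := by
    funext m
    rw [Pi.basisFun_apply]
  rw [h]
  show cc • (Teqv (Pi.single j 1)) = cc • dcol j
  rw [Teqv_single]

end PL
namespace PL

variable {n : ℕ} (GB : Matrix (Fin n) (Fin n) ℤ)

lemma phi_smul (c : ℝ) (x y : Fin (n+2) → ℝ) :
    phiG GB (c • x) (c • y) = (c * c) * phiG GB x y := by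
  show (c • x) ⬝ᵥ ((gramSum ((2:ℤ) • GB) gramII).map (Int.cast : ℤ → ℝ)).mulVec (c • y) = _
  rw [Matrix.mulVec_smul, smul_dotProduct, dotProduct_smul, smul_eq_mul, smul_eq_mul]
  show c * (c * (phiG GB x y)) = (c * c) * (phiG GB x y)
  ring

lemma phi_dd_ee (i j : Fin n) :
    phiG GB (dcol (emb i)) (dcol (emb j)) = ((2 * GB i j : ℤ) : ℝ) := by
  rw [phi_formula, dve0 i, dve1 j, dve1 i, dve0 j]
  have h : ∀ i' j' : Fin n,
      ((2 * GB i' j' : ℤ) : ℝ) * (dcol (emb i) (emb i') * dcol (emb j) (emb j'))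
      = (if i' = i then (if j' = j then ((2 * GB i' j' : ℤ):ℝ) else 0) else 0) := by
    intro i' j'
    rw [dcol_emb, dcol_emb, Pi.single_apply, Pi.single_apply]
    simp only [emb_inj.eq_iff]
    split_ifs <;> ring
  simp only [h]
  have h2 : ∀ i' : Fin n,
      (∑ j' : Fin n, if i' = i then (if j' = j then ((2 * GB i' j' : ℤ):ℝ) else 0) else 0)
      = (if i' = i then ((2 * GB i' j : ℤ):ℝ) else 0) := by
    intro i'
    by_cases h1 : i' = i
    · simp only [h1, if_true]
      rw [Finset.sum_ite_eq' Finset.univ j (fun j' => ((2 * GB i j' : ℤ):ℝ))]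
      simp
    · simp [h1]
  simp only [h2]
  rw [Finset.sum_ite_eq' Finset.univ i (fun i' => ((2 * GB i' j : ℤ):ℝ))]
  simp

lemma phi_dd_e0 (i : Fin n) : phiG GB (dcol (emb i)) (dcol i0) = 0 := by
  rw [phi_formula]
  simp [dv0e, dve0, dve1]

lemma phi_dd_e1 (i : Fin n) : phiG GB (dcol (emb i)) (dcol i1) = 0 := by
  rw [phi_formula]
  simp [dv1e, dve0, dve1]

lemma phi_dd_0e (j : Fin n) : phiG GB (dcol i0) (dcol (emb j)) = 0 := by
  rw [phi_formula]
  simp [dv0e, dve0, dve1]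

lemma phi_dd_1e (j : Fin n) : phiG GB (dcol i1) (dcol (emb j)) = 0 := by
  rw [phi_formula]
  simp [dv1e, dve0, dve1]

lemma phi_dd_00 : phiG GB (dcol i0) (dcol (i0 : Fin (n+2))) = 2 := by
  rw [phi_formula]
  simp [dv0e, dv00, dv01]
  norm_num

lemma phi_dd_01 : phiG GB (dcol i0) (dcol (i1 : Fin (n+2))) = 0 := by
  rw [phi_formula]
  simp [dv0e, dv1e, dv00, dv01, dv10, dv11]

lemma phi_dd_10 : phiG GB (dcol i1) (dcol (i0 : Fin (n+2))) = 0 := by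
  rw [phi_formula]
  simp [dv0e, dv1e, dv00, dv01, dv10, dv11]

lemma phi_dd_11 : phiG GB (dcol i1) (dcol (i1 : Fin (n+2))) = -2 := by
  rw [phi_formula]
  simp [dv1e, dv10, dv11]
  norm_num

lemma HS_ee (i j : Fin n) : gramSum GB (gramI 1 1) (emb i) (emb j) = GB i j :=
  gramSum_ee i j
lemma HS_e0 (i : Fin n) : gramSum GB (gramI 1 1) (emb i) i0 = 0 := gramSum_e0 i
lemma HS_e1 (i : Fin n) : gramSum GB (gramI 1 1) (emb i) i1 = 0 := gramSum_e1 i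
lemma HS_0e (j : Fin n) : gramSum GB (gramI 1 1) i0 (emb j) = 0 := gramSum_0e j
lemma HS_1e (j : Fin n) : gramSum GB (gramI 1 1) i1 (emb j) = 0 := gramSum_1e j
lemma HS_00 : gramSum GB (gramI 1 1) i0 i0 = 1 := by
  rw [gramSum_00]; decide
lemma HS_01 : gramSum GB (gramI 1 1) i0 i1 = 0 := by
  rw [gramSum_01]; decide
lemma HS_10 : gramSum GB (gramI 1 1) i1 i0 = 0 := by
  rw [gramSum_10]; decide
lemma HS_11 : gramSum GB (gramI 1 1) i1 i1 = -1 := by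
  rw [gramSum_11]; decide

lemma gram_target (i j : Fin (n+2)) :
    phiG GB (cc • dcol i) (cc • dcol j) = ((gramSum GB (gramI 1 1) i j : ℤ) : ℝ) := by
  rw [phi_smul, cc_sq]
  rcases cases3 i with ⟨a, rfl⟩ | rfl | rfl
  · rcases cases3 j with ⟨b, rfl⟩ | rfl | rfl
    · rw [phi_dd_ee, HS_ee]; push_cast; ring
    · rw [phi_dd_e0, HS_e0]; norm_num
    · rw [phi_dd_e1, HS_e1]; norm_num
  · rcases cases3 j with ⟨b, rfl⟩ | rfl | rfl
    · rw [phi_dd_0e, HS_0e]; norm_num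
    · rw [phi_dd_00, HS_00]; norm_num
    · rw [phi_dd_01, HS_01]; norm_num
  · rcases cases3 j with ⟨b, rfl⟩ | rfl | rfl
    · rw [phi_dd_1e, HS_1e]; norm_num
    · rw [phi_dd_10, HS_10]; norm_num
    · rw [phi_dd_11, HS_11]; norm_num

section spans

variable {V : Type*} [AddCommGroup V] [Module ℝ V]

lemma map_span_eq_iff (f : V ≃ₗ[ℝ] V) {ι : Type*} (v : ι → V) :
    Submodule.map ((f : V →ₗ[ℝ] V).restrictScalars ℤ)
      (Submodule.span ℤ (Set.range v)) = Submodule.span ℤ (Set.range v) ↔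
    (∀ i, f (v i) ∈ Submodule.span ℤ (Set.range v)) ∧
    (∀ i, f.symm (v i) ∈ Submodule.span ℤ (Set.range v)) := by
  constructor
  · intro h
    constructor
    · intro i
      have hm : f (v i) ∈ Submodule.map ((f : V →ₗ[ℝ] V).restrictScalars ℤ)
          (Submodule.span ℤ (Set.range v)) :=
        Submodule.mem_map_of_mem (Submodule.subset_span ⟨i, rfl⟩)
      rwa [h] at hm
    · intro i
      have hv : v i ∈ Submodule.map ((f : V →ₗ[ℝ] V).restrictScalars ℤ)
          (Submodule.span ℤ (Set.range v)) := by
        rw [h]; exact Submodule.subset_span ⟨i, rfl⟩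
      obtain ⟨y, hy, hyx⟩ := hv
      have : f.symm (v i) = y := by
        rw [← hyx]
        exact f.symm_apply_apply y
      rw [this]; exact hy
  · rintro ⟨h1, h2⟩
    apply le_antisymm
    · rw [Submodule.map_span, Submodule.span_le]
      rintro z ⟨w, ⟨i, rfl⟩, rfl⟩
      exact h1 i
    · rw [Submodule.span_le]
      rintro z ⟨i, rfl⟩
      exact Submodule.mem_map.mpr ⟨f.symm (v i), h2 i, f.apply_symm_apply (v i)⟩

lemma maps_into_of_gen (f : V ≃ₗ[ℝ] V) {ι : Type*} (v : ι → V) (P : Submodule ℤ V)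
    (h : ∀ i, f (v i) ∈ P) : ∀ x ∈ Submodule.span ℤ (Set.range v), f x ∈ P := by
  intro x hx
  have hle : Submodule.map ((f : V →ₗ[ℝ] V).restrictScalars ℤ)
      (Submodule.span ℤ (Set.range v)) ≤ P := by
    rw [Submodule.map_span, Submodule.span_le]
    rintro z ⟨w, ⟨i, rfl⟩, rfl⟩
    exact h i
  exact hle (Submodule.mem_map_of_mem hx)

lemma mem_smul_span_iff (c : ℝ) (hc : c ≠ 0) {ι : Type*} (v : ι → V) (x : V) :
    c • x ∈ Submodule.span ℤ (Set.range fun i => c • v i) ↔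
      x ∈ Submodule.span ℤ (Set.range v) := by
  set ec := (LinearEquiv.smulOfNeZero ℝ V c hc).restrictScalars ℤ with hec
  have hecap : ∀ w : V, ec w = c • w := fun w => rfl
  have hspan : Submodule.span ℤ (Set.range fun i => c • v i)
      = Submodule.map (ec : V →ₗ[ℤ] V) (Submodule.span ℤ (Set.range v)) := by
    rw [Submodule.map_span]
    congr 1
    rw [← Set.range_comp]
    apply congrArg
    funext i
    exact (hecap (v i)).symm
  rw [hspan]
  constructor
  · intro hm
    obtain ⟨y, hy, hxy⟩ := hm
    have hyx : y = x := ec.injective (hxy.trans (hecap x).symm)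
    rwa [← hyx]
  · intro hx
    rw [show c • x = ec x from (hecap x).symm]
    exact Submodule.mem_map_of_mem hx

end spans

lemma isom_symm (f : (Fin (n+2) → ℝ) ≃ₗ[ℝ] (Fin (n+2) → ℝ))
    (hf : ∀ v w, phiG GB (f v) (f w) = phiG GB v w) :
    ∀ v w, phiG GB (f.symm v) (f.symm w) = phiG GB v w := by
  intro v w
  have h := hf (f.symm v) (f.symm w)
  rw [f.apply_symm_apply, f.apply_symm_apply] at h
  exact h.symm

lemma stab1 (heven : EvenGram GB) (f : (Fin (n+2) → ℝ) ≃ₗ[ℝ] (Fin (n+2) → ℝ))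
    (hf : ∀ v w, phiG GB (f v) (f w) = phiG GB v w)
    (hstd : ∀ x ∈ stdLat (n+2), f x ∈ stdLat (n+2))
    (hstd' : ∀ x ∈ stdLat (n+2), f.symm x ∈ stdLat (n+2)) :
    ∀ x ∈ (latD : Submodule ℤ (Fin (n+2) → ℝ)), f x ∈ (latD : Submodule ℤ (Fin (n+2) → ℝ)) := by
  intro x hx
  rw [char1 GB heven] at hx ⊢
  obtain ⟨hx1, hx2⟩ := hx
  refine ⟨hstd x hx1, ?_⟩
  intro z hz hq
  have hz' : f.symm z ∈ stdLat (n+2) := hstd' z hz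
  have hq' : ∃ k : ℤ, phiG GB (f.symm z) (f.symm z) = 4*(k:ℝ)+2 := by
    rw [isom_symm GB f hf]
    exact hq
  obtain ⟨k, hk⟩ := hx2 (f.symm z) hz' hq'
  refine ⟨k, ?_⟩
  calc phiG GB (f x) z = phiG GB (f x) (f (f.symm z)) := by rw [f.apply_symm_apply]
    _ = phiG GB x (f.symm z) := hf _ _
    _ = 2*(k:ℝ) := hk

lemma stab2 (heven : EvenGram GB) (hunim : IsUnit GB.det)
    (f : (Fin (n+2) → ℝ) ≃ₗ[ℝ] (Fin (n+2) → ℝ))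
    (hf : ∀ v w, phiG GB (f v) (f w) = phiG GB v w)
    (_hlat : ∀ x ∈ (latD : Submodule ℤ (Fin (n+2) → ℝ)), f x ∈ (latD : Submodule ℤ (Fin (n+2) → ℝ)))
    (hlat' : ∀ x ∈ (latD : Submodule ℤ (Fin (n+2) → ℝ)),
      f.symm x ∈ (latD : Submodule ℤ (Fin (n+2) → ℝ))) :
    ∀ y ∈ stdLat (n+2), f y ∈ stdLat (n+2) := by
  intro y hy
  rw [char2 GB heven hunim] at hy ⊢
  intro x hx hq
  have hx' := hlat' x hx
  have hq' : ∃ k : ℤ, phiG GB (f.symm x) (f.symm x) = 4*(k:ℝ) := by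
    rw [isom_symm GB f hf]
    exact hq
  obtain ⟨k, hk⟩ := hy (f.symm x) hx' hq'
  refine ⟨k, ?_⟩
  calc phiG GB (f y) x = phiG GB (f y) (f (f.symm x)) := by rw [f.apply_symm_apply]
    _ = phiG GB y (f.symm x) := hf _ _
    _ = 2*(k:ℝ) := hk

end PL
/-- Let `B` be an even unimodular lattice (with symmetric Gram matrix `GB`),
let `V = (B ⊕ ℤ²) ⊗ ℝ` with the bilinear form `φ` extending that of `A = B(2) ⊕ II_{1,1}`
(so `φ` has matrix `gramSum (2 • GB) gramII`), and regard `A` as the standard integer lattice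
in `V`.  Then there is a full-rank lattice `Ahat` in `(V, φ)` isometric to `B ⊕ I_{1,1}`
such that every `φ`-isometry of `V` carries `A` to `A` iff it carries `Ahat` to `Ahat`. -/
theorem period_lattice_stmt0 {n : ℕ} (GB : Matrix (Fin n) (Fin n) ℤ)
    (hsymm : GB.IsSymm) (heven : EvenGram GB) (hunim : IsUnit GB.det) :
    ∃ Ahat : Submodule ℤ (Fin (n + 2) → ℝ),
      SpansWithGram (gramBilinR (gramSum ((2 : ℤ) • GB) gramII)) Ahat (gramSum GB (gramI 1 1)) ∧
      ∀ f : (Fin (n + 2) → ℝ) ≃ₗ[ℝ] (Fin (n + 2) → ℝ),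
        (∀ v w, gramBilinR (gramSum ((2 : ℤ) • GB) gramII) (f v) (f w) =
            gramBilinR (gramSum ((2 : ℤ) • GB) gramII) v w) →
        (Submodule.map (((f : (Fin (n + 2) → ℝ) →ₗ[ℝ] (Fin (n + 2) → ℝ)).restrictScalars ℤ))
            (stdLat (n + 2)) = stdLat (n + 2) ↔
          Submodule.map (((f : (Fin (n + 2) → ℝ) →ₗ[ℝ] (Fin (n + 2) → ℝ)).restrictScalars ℤ))
            Ahat = Ahat) := by
  classical
  have hbb : ⇑(PL.bigBasis : Module.Basis (Fin (n+2)) ℝ (Fin (n+2) → ℝ))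
      = fun j => PL.cc • PL.dcol j := funext PL.bigBasis_apply
  refine ⟨Submodule.span ℤ (Set.range ⇑(PL.bigBasis : Module.Basis (Fin (n+2)) ℝ (Fin (n+2) → ℝ))),
    ⟨PL.bigBasis, rfl, ?_⟩, ?_⟩
  · intro i j
    rw [PL.bigBasis_apply, PL.bigBasis_apply]
    exact PL.gram_target GB i j
  · intro f hf
    constructor
    · intro hA
      obtain ⟨h1, h2⟩ := (PL.map_span_eq_iff f
        (fun i : Fin (n+2) => (Pi.single i (1:ℝ) : Fin (n+2) → ℝ))).mp hA
      have hstd : ∀ x ∈ stdLat (n+2), f x ∈ stdLat (n+2) :=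
        fun x hx => PL.maps_into_of_gen f _ (stdLat (n+2)) h1 x hx
      have hstd' : ∀ x ∈ stdLat (n+2), f.symm x ∈ stdLat (n+2) :=
        fun x hx => PL.maps_into_of_gen f.symm _ (stdLat (n+2)) h2 x hx
      have hstd'' : ∀ x ∈ stdLat (n+2), f.symm.symm x ∈ stdLat (n+2) := by
        intro x hx
        rw [LinearEquiv.symm_symm]
        exact hstd x hx
      have hlat : ∀ x ∈ (PL.latD : Submodule ℤ (Fin (n+2) → ℝ)),
          f x ∈ (PL.latD : Submodule ℤ (Fin (n+2) → ℝ)) :=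
        PL.stab1 GB heven f hf hstd hstd'
      have hlat' : ∀ x ∈ (PL.latD : Submodule ℤ (Fin (n+2) → ℝ)),
          f.symm x ∈ (PL.latD : Submodule ℤ (Fin (n+2) → ℝ)) :=
        PL.stab1 GB heven f.symm (PL.isom_symm GB f hf) hstd' hstd''
      rw [hbb]
      apply (PL.map_span_eq_iff f (fun j => PL.cc • PL.dcol j)).mpr
      constructor
      · intro j
        rw [_root_.map_smul]
        rw [PL.mem_smul_span_iff PL.cc PL.cc_ne PL.dcol]
        exact hlat (PL.dcol j) (Submodule.subset_span ⟨j, rfl⟩)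
      · intro j
        rw [_root_.map_smul]
        rw [PL.mem_smul_span_iff PL.cc PL.cc_ne PL.dcol]
        exact hlat' (PL.dcol j) (Submodule.subset_span ⟨j, rfl⟩)
    · intro hA
      rw [hbb] at hA
      obtain ⟨h1, h2⟩ := (PL.map_span_eq_iff f (fun j => PL.cc • PL.dcol j)).mp hA
      have hl1 : ∀ j, f (PL.dcol j) ∈ (PL.latD : Submodule ℤ (Fin (n+2) → ℝ)) := by
        intro j
        have h := h1 j
        rw [_root_.map_smul] at h
        exact (PL.mem_smul_span_iff PL.cc PL.cc_ne PL.dcol (f (PL.dcol j))).mp h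
      have hl2 : ∀ j, f.symm (PL.dcol j) ∈ (PL.latD : Submodule ℤ (Fin (n+2) → ℝ)) := by
        intro j
        have h := h2 j
        rw [_root_.map_smul] at h
        exact (PL.mem_smul_span_iff PL.cc PL.cc_ne PL.dcol (f.symm (PL.dcol j))).mp h
      have hlat : ∀ x ∈ (PL.latD : Submodule ℤ (Fin (n+2) → ℝ)),
          f x ∈ (PL.latD : Submodule ℤ (Fin (n+2) → ℝ)) :=
        fun x hx => PL.maps_into_of_gen f PL.dcol PL.latD hl1 x hx
      have hlat' : ∀ x ∈ (PL.latD : Submodule ℤ (Fin (n+2) → ℝ)),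
          f.symm x ∈ (PL.latD : Submodule ℤ (Fin (n+2) → ℝ)) :=
        fun x hx => PL.maps_into_of_gen f.symm PL.dcol PL.latD hl2 x hx
      have hlat'' : ∀ x ∈ (PL.latD : Submodule ℤ (Fin (n+2) → ℝ)),
          f.symm.symm x ∈ (PL.latD : Submodule ℤ (Fin (n+2) → ℝ)) := by
        intro x hx
        rw [LinearEquiv.symm_symm]
        exact hlat x hx
      have hstd : ∀ y ∈ stdLat (n+2), f y ∈ stdLat (n+2) :=
        PL.stab2 GB heven hunim f hf hlat hlat'
      have hstd' : ∀ y ∈ stdLat (n+2), f.symm y ∈ stdLat (n+2) :=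
        PL.stab2 GB heven hunim f.symm (PL.isom_symm GB f hf) hlat' hlat''
      exact (PL.map_span_eq_iff f
        (fun i : Fin (n+2) => (Pi.single i (1:ℝ) : Fin (n+2) → ℝ))).mpr
        ⟨fun i => hstd _ (Submodule.subset_span ⟨i, rfl⟩),
         fun i => hstd' _ (Submodule.subset_span ⟨i, rfl⟩)⟩
end

section
/- For every even unimodular ℤ-lattice B, the automorphism group Aut(B(2) ⊕ II_{1,1}) is isomorphic as a group to Aut(B ⊕ I_{1,1}). -/
open Matrix

/-!
Let `L = B(2) ⊕ II_{1,1}` and `M = B ⊕ I_{1,1}` have Gram matrices `G_L` and `G_M`, and let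
`H = [[1, 1], [1, -1]]`. The integer matrices `T = diag(2, H)` and `S = diag(1, H)` satisfy
`T S = S T = 2`, `Tᵀ G_M T = 2 G_L` and `Sᵀ G_L S = 2 G_M`, so over `ℚ` conjugation by `T`
carries the isometries of `G_L` to those of `G_M` and back. It takes integral isometries to
integral ones as soon as `Aut L` preserves `S ℤᴺ` and `Aut M` preserves `T ℤᴺ`, and both lattices
are defined by the forms alone: `S ℤᴺ` consists of the vectors pairing evenly with every vector
of norm `≢ 0 mod 4` (this uses that `B` is even), and `T ℤᴺ` is twice the dual of the even
sublattice of `M` (this uses that `B` is even and unimodular).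
-/

section GramSum

variable {n m : ℕ}

theorem gramSum_mul_gramSum (A A' : Matrix (Fin n) (Fin n) ℤ) (D D' : Matrix (Fin m) (Fin m) ℤ) :
    gramSum A D * gramSum A' D' = gramSum (A * A') (D * D') := by
  simp [gramSum, fromBlocks_multiply]

theorem gramSum_transpose (A : Matrix (Fin n) (Fin n) ℤ) (D : Matrix (Fin m) (Fin m) ℤ) :
    (gramSum A D)ᵀ = gramSum Aᵀ Dᵀ := by
  simp [gramSum, fromBlocks_transpose]

theorem smul_gramSum (c : ℤ) (A : Matrix (Fin n) (Fin n) ℤ) (D : Matrix (Fin m) (Fin m) ℤ) :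
    c • gramSum A D = gramSum (c • A) (c • D) := by
  have h : fromBlocks (c • A) 0 0 (c • D) = c • fromBlocks A 0 0 D := by simp [fromBlocks_smul]
  rw [gramSum, gramSum, h]
  rfl

theorem gramSum_smul_one (c : ℤ) :
    gramSum (c • 1 : Matrix (Fin n) (Fin n) ℤ) (c • 1 : Matrix (Fin m) (Fin m) ℤ) = c • 1 := by
  rw [← smul_gramSum]; simp [gramSum]

theorem gramSum_mulVec_comp_castAdd (A : Matrix (Fin n) (Fin n) ℤ) (D : Matrix (Fin m) (Fin m) ℤ)
    (v : Fin (n + m) → ℤ) : (gramSum A D *ᵥ v) ∘ Fin.castAdd m = A *ᵥ (v ∘ Fin.castAdd m) := by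
  ext i
  simp [gramSum, mulVec, dotProduct, Fin.sum_univ_add]

theorem gramSum_mulVec_comp_natAdd (A : Matrix (Fin n) (Fin n) ℤ) (D : Matrix (Fin m) (Fin m) ℤ)
    (v : Fin (n + m) → ℤ) : (gramSum A D *ᵥ v) ∘ Fin.natAdd n = D *ᵥ (v ∘ Fin.natAdd n) := by
  ext i
  simp [gramSum, mulVec, dotProduct, Fin.sum_univ_add]

theorem dotProduct_gramSum_mulVec (A : Matrix (Fin n) (Fin n) ℤ) (D : Matrix (Fin m) (Fin m) ℤ)
    (v w : Fin (n + m) → ℤ) :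
    v ⬝ᵥ gramSum A D *ᵥ w = (v ∘ Fin.castAdd m) ⬝ᵥ A *ᵥ (w ∘ Fin.castAdd m)
      + (v ∘ Fin.natAdd n) ⬝ᵥ D *ᵥ (w ∘ Fin.natAdd n) := by
  rw [← gramSum_mulVec_comp_castAdd A D, ← gramSum_mulVec_comp_natAdd A D]
  simp only [dotProduct, Fin.sum_univ_add, Function.comp_apply]

theorem dvd_gramSum_mulVec {d : ℤ} {A : Matrix (Fin n) (Fin n) ℤ} {D : Matrix (Fin m) (Fin m) ℤ}
    {v : Fin (n + m) → ℤ} (hA : ∀ i, d ∣ (A *ᵥ (v ∘ Fin.castAdd m)) i)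
    (hD : ∀ i, d ∣ (D *ᵥ (v ∘ Fin.natAdd n)) i) (i : Fin (n + m)) : d ∣ (gramSum A D *ᵥ v) i := by
  refine Fin.addCases (fun i => ?_) (fun i => ?_) i
  · rw [← Function.comp_apply (f := gramSum A D *ᵥ v), gramSum_mulVec_comp_castAdd]
    exact hA i
  · rw [← Function.comp_apply (f := gramSum A D *ᵥ v), gramSum_mulVec_comp_natAdd]
    exact hD i

end GramSum

theorem mem_gramAut {N : ℕ} {G : Matrix (Fin N) (Fin N) ℤ} {P : (Matrix (Fin N) (Fin N) ℤ)ˣ} :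
    P ∈ gramAut G ↔ (P : Matrix (Fin N) (Fin N) ℤ)ᵀ * G * P = G :=
  Iff.rfl

section Conjugation

variable {N : ℕ} {G H T S : Matrix (Fin N) (Fin N) ℤ} {c a : ℤ}

local notation "Mat" => Matrix (Fin N) (Fin N) ℤ

theorem smul_transpose_mul_mul_smul (Y : Mat) :
    (c • Y)ᵀ * H * (c • Y) = c • c • (Yᵀ * H * Y) := by
  rw [transpose_smul, Matrix.smul_mul, Matrix.smul_mul, Matrix.mul_smul]

theorem transpose_mul_mul_mul (X : Mat) :
    (T * X * S)ᵀ * H * (T * X * S) = Sᵀ * (Xᵀ * (Tᵀ * H * T) * X) * S := by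
  simp only [transpose_mul, Matrix.mul_assoc]

/-- Over `ℚ` this is `X ↦ T X T⁻¹` when `T * S = c • 1`; the integer division is exact only
where `c` divides the entries of `T X S`. -/
def conjDiv (T S : Mat) (c : ℤ) (X : Mat) : Mat :=
  (T * X * S).map (· / c)

theorem smul_conjDiv {X : Mat} (h : ∀ i j, c ∣ (T * X * S) i j) :
    c • conjDiv T S c X = T * X * S := by
  ext i j
  exact Int.mul_ediv_cancel' (h i j)

def gramAutConj (hc : c ≠ 0) (hTS : T * S = c • 1) (hST : S * T = c • 1)
    (hT : Tᵀ * H * T = a • G) (hdvd : ∀ P ∈ gramAut G, ∀ i j, c ∣ (T * P * S) i j) :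
    gramAut G →* gramAut H :=
  have cancel : Function.Injective (c • · : Mat → Mat) := smul_right_injective _ hc
  have key (P : gramAut G) : c • conjDiv T S c (P.1 : Mat) = T * (P.1 : Mat) * S :=
    smul_conjDiv (hdvd P P.2)
  let f : gramAut G →* Mat :=
    { toFun := fun P => conjDiv T S c (P.1 : Mat)
      map_one' := cancel <| by simpa [hTS] using key 1
      map_mul' := fun P Q => cancel <| cancel <| by
        calc c • c • conjDiv T S c ((P * Q).1 : Mat) = c • (T * ((P.1 : Mat) * Q.1) * S) := by
              rw [key]; rfl
          _ = (T * (P.1 : Mat) * S) * (T * (Q.1 : Mat) * S) := by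
              simp only [Matrix.mul_assoc]
              rw [← Matrix.mul_assoc S T, hST]
              simp only [Matrix.smul_mul, Matrix.mul_smul, Matrix.one_mul]
          _ = c • c • (conjDiv T S c (P.1 : Mat) * conjDiv T S c (Q.1 : Mat)) := by
              rw [← key, ← key, smul_mul_smul_comm, smul_smul] }
  f.toHomUnits.codRestrict (gramAut H) fun P => cancel <| cancel <| by
    have hP : (P.1 : Mat)ᵀ * G * (P.1 : Mat) = G := P.2
    calc c • c • ((conjDiv T S c (P.1 : Mat))ᵀ * H * conjDiv T S c (P.1 : Mat))
        = (T * (P.1 : Mat) * S)ᵀ * H * (T * (P.1 : Mat) * S) := by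
          rw [← smul_transpose_mul_mul_smul, key]
      _ = (T * 1 * S)ᵀ * H * (T * 1 * S) := by
          rw [transpose_mul_mul_mul, transpose_mul_mul_mul, hT, Matrix.mul_smul, Matrix.smul_mul,
            hP, transpose_one, Matrix.one_mul, Matrix.mul_one]
      _ = c • c • H := by
          rw [Matrix.mul_one, hTS, smul_transpose_mul_mul_smul, transpose_one, Matrix.one_mul,
            Matrix.mul_one]

theorem gramAutConj_apply (hc : c ≠ 0) (hTS : T * S = c • 1) (hST : S * T = c • 1)
    (hT : Tᵀ * H * T = a • G) (hdvd : ∀ P ∈ gramAut G, ∀ i j, c ∣ (T * P * S) i j)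
    (P : gramAut G) :
    ((gramAutConj hc hTS hST hT hdvd P).1 : Mat) = conjDiv T S c P.1 :=
  rfl

theorem conjDiv_conjDiv (hc : c ≠ 0) (hST : S * T = c • 1) {X : Mat}
    (hTXS : ∀ i j, c ∣ (T * X * S) i j) (hSYT : ∀ i j, c ∣ (S * conjDiv T S c X * T) i j) :
    conjDiv S T c (conjDiv T S c X) = X := by
  refine smul_right_injective _ hc (smul_right_injective _ hc ?_)
  calc c • c • conjDiv S T c (conjDiv T S c X) = S * (c • conjDiv T S c X) * T := by
        rw [smul_conjDiv hSYT, Matrix.mul_smul, Matrix.smul_mul]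
    _ = (S * T) * X * (S * T) := by rw [smul_conjDiv hTXS]; simp only [Matrix.mul_assoc]
    _ = c • c • X := by
        rw [hST, Matrix.smul_mul, Matrix.one_mul, Matrix.mul_smul, Matrix.mul_one]

theorem gramAutConj_comp_gramAutConj {b : ℤ} (hc : c ≠ 0) (hTS : T * S = c • 1)
    (hST : S * T = c • 1) (hT : Tᵀ * H * T = a • G) (hS : Sᵀ * G * S = b • H)
    (hTPS : ∀ P ∈ gramAut G, ∀ i j, c ∣ (T * P * S) i j)
    (hSQT : ∀ Q ∈ gramAut H, ∀ i j, c ∣ (S * Q * T) i j) :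
    (gramAutConj hc hST hTS hS hSQT).comp (gramAutConj hc hTS hST hT hTPS) = MonoidHom.id _ := by
  refine MonoidHom.ext fun P => Subtype.ext <| Units.ext ?_
  have hdvd := hSQT _ (gramAutConj hc hTS hST hT hTPS P).2
  rw [gramAutConj_apply] at hdvd
  simp only [MonoidHom.comp_apply, MonoidHom.id_apply, gramAutConj_apply]
  exact conjDiv_conjDiv hc hST (hTPS P P.2) hdvd

def gramAutEquivOfConj {b : ℤ} (hc : c ≠ 0) (hTS : T * S = c • 1) (hST : S * T = c • 1)
    (hT : Tᵀ * H * T = a • G) (hS : Sᵀ * G * S = b • H)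
    (hTPS : ∀ P ∈ gramAut G, ∀ i j, c ∣ (T * P * S) i j)
    (hSQT : ∀ Q ∈ gramAut H, ∀ i j, c ∣ (S * Q * T) i j) :
    gramAut G ≃* gramAut H :=
  (gramAutConj hc hTS hST hT hTPS).toMulEquiv (gramAutConj hc hST hTS hS hSQT)
    (gramAutConj_comp_gramAutConj hc hTS hST hT hS hTPS hSQT)
    (gramAutConj_comp_gramAutConj hc hST hTS hS hT hSQT hTPS)

end Conjugation

section PairingDvd

variable {N : ℕ} {G : Matrix (Fin N) (Fin N) ℤ}

theorem dotProduct_mulVec_of_mem_gramAut {P : (Matrix (Fin N) (Fin N) ℤ)ˣ} (hP : P ∈ gramAut G)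
    (v w : Fin N → ℤ) : (P *ᵥ v) ⬝ᵥ G *ᵥ (P *ᵥ w) = v ⬝ᵥ G *ᵥ w := by
  rw [mulVec_mulVec, dotProduct_mulVec, ← vecMul_transpose, vecMul_vecMul, ← dotProduct_mulVec,
    ← Matrix.mul_assoc, mem_gramAut.1 hP]

def pairingDvdSet (G : Matrix (Fin N) (Fin N) ℤ) (p : ℤ → Prop) (d : ℤ) : Set (Fin N → ℤ) :=
  {v | ∀ w, p (w ⬝ᵥ G *ᵥ w) → d ∣ w ⬝ᵥ G *ᵥ v}

theorem mulVec_mem_pairingDvdSet {p : ℤ → Prop} {d : ℤ} {P : (Matrix (Fin N) (Fin N) ℤ)ˣ}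
    (hP : P ∈ gramAut G) {v : Fin N → ℤ} (hv : v ∈ pairingDvdSet G p d) :
    (P : Matrix (Fin N) (Fin N) ℤ) *ᵥ v ∈ pairingDvdSet G p d := by
  intro w hw
  have hw' : (P : Matrix (Fin N) (Fin N) ℤ) *ᵥ (↑P⁻¹ *ᵥ w) = w := by
    rw [mulVec_mulVec, Units.mul_inv, one_mulVec]
  rw [← hw', dotProduct_mulVec_of_mem_gramAut hP] at hw ⊢
  exact hv _ hw

theorem dvd_mul_mul_apply_of_mem_gramAut {p : ℤ → Prop} {d : ℤ} {T S : Matrix (Fin N) (Fin N) ℤ}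
    (hS : ∀ y, S *ᵥ y ∈ pairingDvdSet G p d)
    (hT : ∀ v ∈ pairingDvdSet G p d, ∀ i, d ∣ (T *ᵥ v) i)
    {P : (Matrix (Fin N) (Fin N) ℤ)ˣ} (hP : P ∈ gramAut G) (i j : Fin N) :
    d ∣ (T * P * S) i j := by
  have h := hT _ (mulVec_mem_pairingDvdSet hP (hS (Pi.single j 1))) i
  rwa [mulVec_mulVec, mulVec_mulVec, mulVec_single_one] at h

end PairingDvd

theorem dvd_of_forall_dvd_mulVec {ι : Type*} [Fintype ι] [DecidableEq ι] {A : Matrix ι ι ℤ}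
    (hA : IsUnit A.det) {d : ℤ} {x : ι → ℤ} (h : ∀ j, d ∣ (A *ᵥ x) j) (i : ι) : d ∣ x i := by
  rw [← one_mulVec x, ← nonsing_inv_mul A hA, ← mulVec_mulVec]
  exact Finset.dvd_sum fun j _ => dvd_mul_of_dvd_right (h j) _

def hadamard₂ : Matrix (Fin 2) (Fin 2) ℤ := !![1, 1; 1, -1]

theorem hadamard₂_mul_self : hadamard₂ * hadamard₂ = (2 : ℤ) • 1 := by
  decide

theorem transpose_hadamard₂_mul_gramI_mul :
    hadamard₂ᵀ * gramI 1 1 * hadamard₂ = (2 : ℤ) • gramII := by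
  decide

theorem transpose_hadamard₂_mul_gramII_mul :
    hadamard₂ᵀ * gramII * hadamard₂ = (2 : ℤ) • gramI 1 1 := by
  decide

theorem hadamard₂_mulVec_zero (y : Fin 2 → ℤ) : (hadamard₂ *ᵥ y) 0 = y 0 + y 1 := by
  simp [hadamard₂, mulVec, dotProduct, Fin.sum_univ_two]

theorem hadamard₂_mulVec_one (y : Fin 2 → ℤ) : (hadamard₂ *ᵥ y) 1 = y 0 - y 1 := by
  simp [hadamard₂, mulVec, dotProduct, Fin.sum_univ_two, sub_eq_add_neg]

theorem dotProduct_gramII_mulVec (x y : Fin 2 → ℤ) :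
    x ⬝ᵥ gramII *ᵥ y = x 0 * y 1 + x 1 * y 0 := by
  simp [gramII, mulVec, dotProduct, Fin.sum_univ_two]

theorem dotProduct_gramI_mulVec (x y : Fin 2 → ℤ) :
    x ⬝ᵥ gramI 1 1 *ᵥ y = x 0 * y 0 - x 1 * y 1 := by
  simp [gramI, mulVec_diagonal, dotProduct, Fin.sum_univ_two, sub_eq_add_neg]

def toOddCoords (n : ℕ) : Matrix (Fin (n + 2)) (Fin (n + 2)) ℤ :=
  gramSum ((2 : ℤ) • 1) hadamard₂

def toEvenCoords (n : ℕ) : Matrix (Fin (n + 2)) (Fin (n + 2)) ℤ :=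
  gramSum 1 hadamard₂

section EvenUnimodular

variable {n : ℕ} {B : Matrix (Fin n) (Fin n) ℤ}

theorem toOddCoords_mul_toEvenCoords : toOddCoords n * toEvenCoords n = (2 : ℤ) • 1 := by
  rw [toOddCoords, toEvenCoords, gramSum_mul_gramSum, Matrix.mul_one, hadamard₂_mul_self,
    gramSum_smul_one]

theorem toEvenCoords_mul_toOddCoords : toEvenCoords n * toOddCoords n = (2 : ℤ) • 1 := by
  rw [toOddCoords, toEvenCoords, gramSum_mul_gramSum, Matrix.one_mul, hadamard₂_mul_self,
    gramSum_smul_one]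

theorem transpose_toOddCoords_mul_gramSum_mul :
    (toOddCoords n)ᵀ * gramSum B (gramI 1 1) * toOddCoords n =
      (2 : ℤ) • gramSum ((2 : ℤ) • B) gramII := by
  rw [toOddCoords, gramSum_transpose, gramSum_mul_gramSum, gramSum_mul_gramSum,
    transpose_hadamard₂_mul_gramI_mul, smul_gramSum, transpose_smul, transpose_one,
    Matrix.smul_mul, Matrix.one_mul, Matrix.mul_smul, Matrix.mul_one]

theorem transpose_toEvenCoords_mul_gramSum_mul :
    (toEvenCoords n)ᵀ * gramSum ((2 : ℤ) • B) gramII * toEvenCoords n =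
      (2 : ℤ) • gramSum B (gramI 1 1) := by
  rw [toEvenCoords, gramSum_transpose, gramSum_mul_gramSum, gramSum_mul_gramSum,
    transpose_hadamard₂_mul_gramII_mul, smul_gramSum]
  simp

theorem toEvenCoords_mulVec_mem_pairingDvdSet (heven : EvenGram B) (y : Fin (n + 2) → ℤ) :
    toEvenCoords n *ᵥ y ∈ pairingDvdSet (gramSum ((2 : ℤ) • B) gramII) (fun k => ¬ 4 ∣ k) 2 := by
  intro w hw
  obtain ⟨k, hk⟩ := heven (w ∘ Fin.castAdd 2)
  rw [dotProduct_gramSum_mulVec, dotProduct_gramII_mulVec, smul_mulVec, dotProduct_smul,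
    hk] at hw
  have hodd : Odd (w (Fin.natAdd n 0)) ∧ Odd (w (Fin.natAdd n 1)) := by
    simp only [Function.comp_apply, smul_eq_mul] at hw
    rw [mul_comm (w (Fin.natAdd n 1))] at hw
    rw [← Int.odd_mul, Int.odd_iff]
    omega
  rw [toEvenCoords, dotProduct_gramSum_mulVec, gramSum_mulVec_comp_castAdd,
    gramSum_mulVec_comp_natAdd, dotProduct_gramII_mulVec, hadamard₂_mulVec_zero,
    hadamard₂_mulVec_one, one_mulVec, smul_mulVec, dotProduct_smul, smul_eq_mul,
    ← even_iff_two_dvd]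
  simp [parity_simps, Int.not_even_iff_odd.2 hodd.1, Int.not_even_iff_odd.2 hodd.2]

theorem two_dvd_toOddCoords_mulVec (v : Fin (n + 2) → ℤ)
    (hv : v ∈ pairingDvdSet (gramSum ((2 : ℤ) • B) gramII) (fun k => ¬ 4 ∣ k) 2)
    (i : Fin (n + 2)) : 2 ∣ (toOddCoords n *ᵥ v) i := by
  have hv₀ : 2 ∣ v (Fin.natAdd n 0) + v (Fin.natAdd n 1) := by
    have h := hv (Fin.append 0 ![1, 1]) (by
      rw [dotProduct_gramSum_mulVec, dotProduct_gramII_mulVec]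
      simp [Function.comp_def])
    rw [dotProduct_gramSum_mulVec, dotProduct_gramII_mulVec] at h
    simpa [Function.comp_def, add_comm] using h
  refine dvd_gramSum_mulVec (fun i => by simp) (Fin.forall_fin_two.2 ⟨?_, ?_⟩) i
  · simpa [hadamard₂_mulVec_zero] using hv₀
  · simp only [hadamard₂_mulVec_one, Function.comp_apply]
    omega

theorem toOddCoords_mulVec_mem_pairingDvdSet (heven : EvenGram B) (y : Fin (n + 2) → ℤ) :
    toOddCoords n *ᵥ y ∈ pairingDvdSet (gramSum B (gramI 1 1)) (fun k => 2 ∣ k) 2 := by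
  intro w hw
  obtain ⟨k, hk⟩ := heven (w ∘ Fin.castAdd 2)
  rw [dotProduct_gramSum_mulVec, dotProduct_gramI_mulVec, hk, ← even_iff_two_dvd] at hw
  have hpar : Even (w (Fin.natAdd n 0)) ↔ Even (w (Fin.natAdd n 1)) := by
    simpa [parity_simps] using hw
  rw [toOddCoords, dotProduct_gramSum_mulVec, gramSum_mulVec_comp_castAdd,
    gramSum_mulVec_comp_natAdd, dotProduct_gramI_mulVec, hadamard₂_mulVec_zero,
    hadamard₂_mulVec_one, smul_mulVec, one_mulVec, mulVec_smul, dotProduct_smul, smul_eq_mul,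
    ← even_iff_two_dvd]
  simp [parity_simps, hpar]

theorem two_dvd_toEvenCoords_mulVec (heven : EvenGram B) (hunim : IsUnit B.det)
    (v : Fin (n + 2) → ℤ) (hv : v ∈ pairingDvdSet (gramSum B (gramI 1 1)) (fun k => 2 ∣ k) 2)
    (i : Fin (n + 2)) : 2 ∣ (toEvenCoords n *ᵥ v) i := by
  have hBv (j : Fin n) : 2 ∣ (B *ᵥ (v ∘ Fin.castAdd 2)) j := by
    have h := hv (Fin.append (Pi.single j 1) 0) (by
      dsimp only
      rw [dotProduct_gramSum_mulVec, ← even_iff_two_dvd]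
      simpa [Function.comp_def] using heven (Pi.single j 1))
    rw [dotProduct_gramSum_mulVec] at h
    simpa [Function.comp_def] using h
  have hv₀ : 2 ∣ v (Fin.natAdd n 0) - v (Fin.natAdd n 1) := by
    have h := hv (Fin.append 0 ![1, 1]) (by
      rw [dotProduct_gramSum_mulVec, dotProduct_gramI_mulVec]
      simp [Function.comp_def])
    rw [dotProduct_gramSum_mulVec, dotProduct_gramI_mulVec] at h
    simpa [Function.comp_def] using h
  refine dvd_gramSum_mulVec (fun i => ?_) (Fin.forall_fin_two.2 ⟨?_, ?_⟩) i
  · rw [one_mulVec]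
    exact dvd_of_forall_dvd_mulVec hunim hBv i
  · simp only [hadamard₂_mulVec_zero, Function.comp_apply]
    omega
  · simpa [hadamard₂_mulVec_one] using hv₀

end EvenUnimodular

theorem period_lattice_stmt1_general {n : ℕ} (GB : Matrix (Fin n) (Fin n) ℤ)
    (heven : EvenGram GB) (hunim : IsUnit GB.det) :
    Nonempty (gramAut (gramSum ((2 : ℤ) • GB) gramII) ≃* gramAut (gramSum GB (gramI 1 1))) :=
  ⟨gramAutEquivOfConj two_ne_zero toOddCoords_mul_toEvenCoords toEvenCoords_mul_toOddCoords
    transpose_toOddCoords_mul_gramSum_mul transpose_toEvenCoords_mul_gramSum_mul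
    (fun _ hP => dvd_mul_mul_apply_of_mem_gramAut
      (toEvenCoords_mulVec_mem_pairingDvdSet heven) two_dvd_toOddCoords_mulVec hP)
    (fun _ hQ => dvd_mul_mul_apply_of_mem_gramAut
      (toOddCoords_mulVec_mem_pairingDvdSet heven) (two_dvd_toEvenCoords_mulVec heven hunim) hQ)⟩

/-- For every even unimodular lattice `B` (symmetric Gram matrix `GB`),
the automorphism group `Aut(B(2) ⊕ II_{1,1})` is isomorphic as a group
to `Aut(B ⊕ I_{1,1})`. -/
theorem period_lattice_stmt1 {n : ℕ} (GB : Matrix (Fin n) (Fin n) ℤ)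
    (hsymm : GB.IsSymm) (heven : EvenGram GB) (hunim : IsUnit GB.det) :
    Nonempty (gramAut (gramSum ((2 : ℤ) • GB) gramII) ≃* gramAut (gramSum GB (gramI 1 1))) :=
  period_lattice_stmt1_general GB heven hunim
end

section
/- Let B be an even unimodular ℤ-lattice, let (V, φ) be a real quadratic space, and let L be a full-rank lattice in (V, φ) isometric to B ⊕ II_{1,1}(2). Then there is exactly one odd unimodular full-rank lattice in (V, φ) containing L. -/
/-!
Write `e = b (inr 0)`, `f = b (inr 1)` for the `II_{1,1}(2)` part of a basis `b` of `L`, so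
that `φ e f = 2`. Since `B` is unimodular, the dual of `L` consists of the vectors
`β + (a/2) e + (c/2) f` with `β ∈ B` and `a, c ∈ ℤ`, and the norm of such a vector is `β² + a c`.
An integral lattice `M ⊇ L` lies in this dual; if `M` is odd, it contains such a vector with `a`,
`c` odd (`B` being even), hence `w = (e + f)/2`, and pairing integrally with that vector forces
`a ≡ c (mod 2)` on all of `M`, so `M = L + ℤ w`. Conversely `L + ℤ w` has the basis `(β_i, w, e)`
with unimodular Gram matrix `B ⊕ [[1, 1], [1, 0]]`, and `w` has norm `1`.
-/

open Matrix

open Submodule Set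

section GramMatrix

variable {V : Type*} [AddCommGroup V] [Module ℝ V] (φ : V →ₗ[ℝ] V →ₗ[ℝ] ℝ)

theorem exists_apply_eq_intCast_of_mem_span {f : V →ₗ[ℝ] ℝ} {s : Set V}
    (hs : ∀ y ∈ s, ∃ k : ℤ, f y = k) {y : V} (hy : y ∈ span ℤ s) : ∃ k : ℤ, f y = k := by
  induction hy using Submodule.span_induction with
  | mem y hy => exact hs y hy
  | zero => exact ⟨0, by simp⟩
  | add y z _ _ hy hz =>
    obtain ⟨k, hk⟩ := hy
    obtain ⟨l, hl⟩ := hz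
    exact ⟨k + l, by simp [hk, hl]⟩
  | smul a y _ hy =>
    obtain ⟨k, hk⟩ := hy
    exact ⟨a * k, by simp [hk]⟩

theorem SpansWithGram.exists_apply_eq_intCast {M : Submodule ℤ V} {m : ℕ}
    {H : Matrix (Fin m) (Fin m) ℤ} (hM : SpansWithGram φ M H) {x y : V} (hx : x ∈ M)
    (hy : y ∈ M) : ∃ k : ℤ, φ x y = k := by
  obtain ⟨d, rfl, hd⟩ := hM
  refine exists_apply_eq_intCast_of_mem_span (f := φ.flip y) ?_ hx
  rintro _ ⟨i, rfl⟩
  refine exists_apply_eq_intCast_of_mem_span (f := φ (d i)) ?_ hy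
  rintro _ ⟨j, rfl⟩
  exact ⟨_, hd i j⟩

theorem spansWithGram_gramSum_iff {L : Submodule ℤ V} {n m : ℕ} (G : Matrix (Fin n) (Fin n) ℤ)
    (H : Matrix (Fin m) (Fin m) ℤ) :
    SpansWithGram φ L (gramSum G H) ↔ ∃ b : Module.Basis (Fin n ⊕ Fin m) ℝ V,
      L = span ℤ (range b) ∧ ∀ s t, φ (b s) (b t) = ((fromBlocks G 0 0 H s t : ℤ) : ℝ) := by
  constructor
  · rintro ⟨b, rfl, hb⟩
    refine ⟨b.reindex finSumFinEquiv.symm, by rw [Module.Basis.range_reindex], fun s t => ?_⟩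
    simp [hb, gramSum]
  · rintro ⟨b, rfl, hb⟩
    refine ⟨b.reindex finSumFinEquiv, by rw [Module.Basis.range_reindex], fun i j => ?_⟩
    simp [hb, gramSum]

variable {ι : Type*} [Fintype ι]

theorem apply_sum_smul_left {p : ι → V} {G : Matrix ι ι ℝ}
    (hp : ∀ i j, φ (p i) (p j) = G i j) (g : ι → ℝ) (j : ι) :
    φ (∑ i, g i • p i) (p j) = (g ᵥ* G) j := by
  simp [hp, vecMul, dotProduct]

theorem linearIndependent_of_det_ne_zero [DecidableEq ι] {p : ι → V} {G : Matrix ι ι ℝ}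
    (hp : ∀ i j, φ (p i) (p j) = G i j) (hG : G.det ≠ 0) : LinearIndependent ℝ p := by
  refine Fintype.linearIndependent_iff.2 fun g hg => congrFun (eq_zero_of_vecMul_eq_zero hG ?_)
  ext j
  rw [← apply_sum_smul_left φ hp, hg]
  simp

end GramMatrix

theorem Matrix.eq_intCast_comp_vecMul_inv {ι : Type*} [Fintype ι] [DecidableEq ι]
    {G : Matrix ι ι ℤ} (hG : IsUnit G.det) {c : ι → ℝ} {q : ι → ℤ}
    (hc : c ᵥ* G.map (↑) = (↑) ∘ q) : c = (↑) ∘ (q ᵥ* G⁻¹) := by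
  have hinv : G.map (Int.castRingHom ℝ) * G⁻¹.map (Int.castRingHom ℝ) = 1 := by
    rw [← Matrix.map_mul, Matrix.mul_nonsing_inv G hG, Matrix.map_one _ (map_zero _) (map_one _)]
  calc c = c ᵥ* (G.map (Int.castRingHom ℝ) * G⁻¹.map (Int.castRingHom ℝ)) := by
        rw [hinv, vecMul_one]
    _ = ((↑) ∘ q) ᵥ* G⁻¹.map (Int.castRingHom ℝ) := by
        rw [← vecMul_vecMul]; simp [hc]
    _ = (↑) ∘ (q ᵥ* G⁻¹) := funext fun i => (RingHom.map_vecMul (Int.castRingHom ℝ) _ _ i).symm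

noncomputable section HalfIntegral

variable {V : Type*} [AddCommGroup V] [Module ℝ V] {n : ℕ}
  (b : Module.Basis (Fin n ⊕ Fin 2) ℝ V)

/-- The vector `∑ vᵢ b (inl i) + (a/2) b (inr 0) + (c/2) b (inr 1)`; by `exists_eq_halfComb`
these make up the dual of `span ℤ (range b)`. -/
def halfComb (v : Fin n → ℤ) (a c : ℤ) : V :=
  b.equivFun.symm (Sum.elim (fun i => (v i : ℝ)) ![(a : ℝ) / 2, (c : ℝ) / 2])

def halfSum : V := (2 : ℝ)⁻¹ • (b (.inr 0) + b (.inr 1))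

def oddFamily : Fin n ⊕ Fin 2 → V := Sum.elim (fun i => b (.inl i)) ![halfSum b, b (.inr 0)]

theorem halfComb_add_one_add_one (v : Fin n → ℤ) (a c : ℤ) :
    halfComb b v (a + 1) (c + 1) = halfComb b v a c + halfSum b := by
  simp only [halfComb, halfSum, Module.Basis.equivFun_symm_apply, Fintype.sum_sum_type,
    Fin.sum_univ_two, Sum.elim_inl, Sum.elim_inr, cons_val_zero, cons_val_one, cons_val_fin_one,
    Int.cast_add, Int.cast_one]
  module

theorem halfComb_two_mul_mem_span (v : Fin n → ℤ) (a c : ℤ) :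
    halfComb b v (2 * a) (2 * c) ∈ span ℤ (range b) := by
  rw [halfComb, Module.Basis.equivFun_symm_apply, Submodule.mem_span_range_iff_exists_fun]
  refine ⟨Sum.elim v ![a, c], Fintype.sum_congr _ _ ?_⟩
  rintro (i | k)
  · simp [← Int.cast_smul_eq_zsmul ℝ]
  · fin_cases k <;> simp [← Int.cast_smul_eq_zsmul ℝ]

theorem span_range_le_span_oddFamily : span ℤ (range b) ≤ span ℤ (range (oddFamily b)) := by
  rw [span_le]
  rintro _ ⟨i | k, rfl⟩
  · exact subset_span ⟨.inl i, rfl⟩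
  · fin_cases k
    · exact subset_span ⟨.inr 1, rfl⟩
    · have : b (.inr 1) = (2 : ℤ) • oddFamily b (.inr 0) - oddFamily b (.inr 1) := by
        simp [oddFamily, halfSum, ← Int.cast_smul_eq_zsmul ℝ]
      rw [Fin.mk_one, this]
      exact sub_mem (zsmul_mem (subset_span (mem_range_self _)) _) (subset_span (mem_range_self _))

theorem halfComb_mem_span_oddFamily (v : Fin n → ℤ) {a c : ℤ} (h : Even (a + c)) :
    halfComb b v a c ∈ span ℤ (range (oddFamily b)) := by
  rcases Int.even_or_odd a with ha | ⟨α, rfl⟩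
  · obtain ⟨α, rfl⟩ := ha.two_dvd
    obtain ⟨γ, rfl⟩ := (Int.even_add.1 h |>.1 ha).two_dvd
    exact span_range_le_span_oddFamily b (halfComb_two_mul_mem_span b v α γ)
  · obtain ⟨γ, rfl⟩ : Odd c := by
      obtain ⟨r, hr⟩ := h
      exact ⟨r - α - 1, by omega⟩
    rw [halfComb_add_one_add_one]
    exact add_mem (span_range_le_span_oddFamily b (halfComb_two_mul_mem_span b v α γ))
      (subset_span ⟨.inr 0, rfl⟩)

theorem span_oddFamily_le {M : Submodule ℤ V} (hL : span ℤ (range b) ≤ M)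
    (hw : halfSum b ∈ M) : span ℤ (range (oddFamily b)) ≤ M := by
  rw [span_le]
  rintro _ ⟨i | k, rfl⟩
  · exact hL (subset_span ⟨.inl i, rfl⟩)
  · fin_cases k
    · exact hw
    · exact hL (subset_span ⟨.inr 0, rfl⟩)

variable (φ : V →ₗ[ℝ] V →ₗ[ℝ] ℝ) {GB : Matrix (Fin n) (Fin n) ℤ}
  (hb : ∀ s t, φ (b s) (b t) = ((fromBlocks GB 0 0 ((2 : ℤ) • gramII) s t : ℤ) : ℝ))
include hb

theorem apply_halfComb_halfComb (v v' : Fin n → ℤ) (a c a' c' : ℤ) :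
    φ (halfComb b v a c) (halfComb b v' a' c') =
      ((2 * (v ⬝ᵥ GB *ᵥ v') + (a * c' + c * a') : ℤ) : ℝ) / 2 := by
  have hG : LinearMap.toMatrix₂ b b φ = (fromBlocks GB 0 0 ((2 : ℤ) • gramII)).map (↑) := by
    ext s t; simp [hb]
  rw [halfComb, halfComb, ← dotProduct_toMatrix₂_mulVec, hG]
  simp [dotProduct, mulVec, Fintype.sum_sum_type, Fin.sum_univ_two, gramII]
  ring

theorem apply_oddFamily (s t : Fin n ⊕ Fin 2) :
    φ (oddFamily b s) (oddFamily b t) = ((fromBlocks GB 0 0 !![1, 1; 1, 0] s t : ℤ) : ℝ) := by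
  rcases s with i | k <;> rcases t with j | l
  · simp [oddFamily, hb]
  · fin_cases l <;> simp [oddFamily, halfSum, hb]
  · fin_cases k <;> simp [oddFamily, halfSum, hb]
  · fin_cases k <;> fin_cases l <;> norm_num [oddFamily, halfSum, hb, gramII]

theorem exists_eq_halfComb (hunim : IsUnit GB.det) {x : V} (hx : ∀ s, ∃ k : ℤ, φ x (b s) = k) :
    ∃ v a c, x = halfComb b v a c := by
  choose q hq using hx
  set y := b.equivFun x
  have hy : y ᵥ* (fromBlocks GB 0 0 ((2 : ℤ) • gramII)).map (↑) = (↑) ∘ q := by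
    ext t
    rw [← apply_sum_smul_left φ (G := (fromBlocks GB 0 0 ((2 : ℤ) • gramII)).map (↑)) hb,
      b.sum_equivFun]
    exact hq t
  rw [fromBlocks_map, vecMul_fromBlocks] at hy
  have hB : y ∘ Sum.inl = (↑) ∘ (q ∘ Sum.inl ᵥ* GB⁻¹) :=
    Matrix.eq_intCast_comp_vecMul_inv hunim (funext fun j => by simpa using congrFun hy (.inl j))
  have h0 : y (.inr 1) * 2 = q (.inr 0) := by
    simpa [vecMul, dotProduct, Fin.sum_univ_two, gramII] using congrFun hy (.inr 0)
  have h1 : y (.inr 0) * 2 = q (.inr 1) := by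
    simpa [vecMul, dotProduct, Fin.sum_univ_two, gramII] using congrFun hy (.inr 1)
  refine ⟨q ∘ Sum.inl ᵥ* GB⁻¹, q (.inr 1), q (.inr 0), b.equivFun.injective ?_⟩
  rw [halfComb, LinearEquiv.apply_symm_apply]
  ext (i | k)
  · exact congrFun hB i
  · fin_cases k
    · simpa [y, eq_div_iff] using h1
    · simpa [y, eq_div_iff] using h0

theorem isOddUnimodularLat_span_oddFamily (hunim : IsUnit GB.det) :
    IsOddUnimodularLat φ (span ℤ (range (oddFamily b))) := by
  have hdet : IsUnit (fromBlocks GB 0 0 !![1, 1; 1, 0]).det := by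
    simpa [det_fromBlocks_zero₁₂, det_fin_two_of] using hunim.neg
  have hli : LinearIndependent ℝ (oddFamily b) := by
    refine linearIndependent_of_det_ne_zero φ (G := (fromBlocks GB 0 0 !![1, 1; 1, 0]).map (↑))
      (apply_oddFamily b φ hb) ?_
    rw [show (fromBlocks GB 0 0 !![1, 1; 1, 0]).map (Int.cast : ℤ → ℝ) =
      (Int.castRingHom ℝ).mapMatrix _ from rfl, ← RingHom.map_det]
    exact (hdet.map _).ne_zero
  let c := basisOfLinearIndependentOfCardEqFinrank hli (Module.finrank_eq_card_basis b).symm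
  have hc : ⇑c = oddFamily b := coe_basisOfLinearIndependentOfCardEqFinrank hli _
  refine ⟨⟨n + 2, gramSum GB !![1, 1; 1, 0], (spansWithGram_gramSum_iff φ _ _).2
    ⟨c, by rw [hc], by simpa [hc] using apply_oddFamily b φ hb⟩, ?_⟩, ?_⟩
  · simpa [gramSum] using hdet
  · intro heven
    obtain ⟨k, hk⟩ := heven (halfSum b) (subset_span ⟨.inr 0, rfl⟩)
    have hnorm : φ (halfSum b) (halfSum b) = 1 := by
      simpa [oddFamily] using apply_oddFamily b φ hb (.inr 0) (.inr 0)
    rw [hnorm] at hk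
    have : (1 : ℤ) = 2 * k := by exact_mod_cast hk
    omega

theorem eq_span_oddFamily (heven : EvenGram GB) (hunim : IsUnit GB.det) {M : Submodule ℤ V}
    (hM : IsOddUnimodularLat φ M) (hLM : span ℤ (range b) ≤ M) :
    M = span ℤ (range (oddFamily b)) := by
  obtain ⟨⟨m, H, hMH, -⟩, hodd⟩ := hM
  have hdual : ∀ x ∈ M, ∃ v a c, x = halfComb b v a c := fun x hx =>
    exists_eq_halfComb b φ hb hunim fun s =>
      hMH.exists_apply_eq_intCast φ hx (hLM (subset_span (mem_range_self s)))
  push Not at hodd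
  obtain ⟨x, hx, hxodd⟩ := hodd
  obtain ⟨v, a, c, rfl⟩ := hdual x hx
  obtain ⟨⟨α, rfl⟩, ⟨γ, rfl⟩⟩ : Odd a ∧ Odd c := by
    obtain ⟨k, hk⟩ := heven v
    by_contra h
    obtain ⟨l, hl⟩ : Even (a * c) :=
      Int.even_mul.2 ((not_and_or.1 h).imp Int.not_odd_iff_even.1 Int.not_odd_iff_even.1)
    apply hxodd (k + l)
    rw [apply_halfComb_halfComb b φ hb, hk, mul_comm c a, hl]
    push_cast
    ring
  have hw : halfSum b ∈ M := by
    have := sub_mem hx (hLM (halfComb_two_mul_mem_span b v α γ))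
    rwa [halfComb_add_one_add_one, add_sub_cancel_left] at this
  refine le_antisymm (fun y hy => ?_) (span_oddFamily_le b hLM hw)
  obtain ⟨v', a', c', rfl⟩ := hdual y hy
  obtain ⟨k, hk⟩ := hMH.exists_apply_eq_intCast φ hx hy
  rw [apply_halfComb_halfComb b φ hb] at hk
  have hk' : (2 * (v ⬝ᵥ GB *ᵥ v') + ((2 * α + 1) * c' + (2 * γ + 1) * a') : ℤ) = 2 * k := by
    exact_mod_cast (div_eq_iff two_ne_zero).1 hk |>.trans (mul_comm _ _)
  refine halfComb_mem_span_oddFamily b v' ⟨k - v ⬝ᵥ GB *ᵥ v' - α * c' - γ * a', ?_⟩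
  linarith

end HalfIntegral

theorem period_lattice_stmt3_general {V : Type*} [AddCommGroup V] [Module ℝ V]
    (φ : V →ₗ[ℝ] V →ₗ[ℝ] ℝ)
    {n : ℕ} (GB : Matrix (Fin n) (Fin n) ℤ)
    (heven : EvenGram GB) (hunim : IsUnit GB.det)
    (L : Submodule ℤ V) (hL : SpansWithGram φ L (gramSum GB ((2 : ℤ) • gramII))) :
    ∃! M : Submodule ℤ V, IsOddUnimodularLat φ M ∧ L ≤ M := by
  obtain ⟨b, rfl, hb⟩ := (spansWithGram_gramSum_iff φ GB _).1 hL
  exact ⟨span ℤ (range (oddFamily b)),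
    ⟨isOddUnimodularLat_span_oddFamily b φ hb hunim, span_range_le_span_oddFamily b⟩,
    fun M ⟨hM, hLM⟩ => eq_span_oddFamily b φ hb heven hunim hM hLM⟩

/-- Let `B` be an even unimodular lattice (symmetric Gram matrix `GB`),
let `(V, φ)` be a real quadratic space, and let `L` be a full-rank lattice in `(V, φ)`
isometric to `B ⊕ II_{1,1}(2)`.  Then there is exactly one odd unimodular full-rank
lattice in `(V, φ)` containing `L`. -/
theorem period_lattice_stmt3 {V : Type*} [AddCommGroup V] [Module ℝ V]
    (φ : V →ₗ[ℝ] V →ₗ[ℝ] ℝ) (hφ : ∀ x y, φ x y = φ y x)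
    {n : ℕ} (GB : Matrix (Fin n) (Fin n) ℤ)
    (hsymm : GB.IsSymm) (heven : EvenGram GB) (hunim : IsUnit GB.det)
    (L : Submodule ℤ V) (hL : SpansWithGram φ L (gramSum GB ((2 : ℤ) • gramII))) :
    ∃! M : Submodule ℤ V, IsOddUnimodularLat φ M ∧ L ≤ M :=
  period_lattice_stmt3_general φ GB heven hunim L hL
end

section
/- Let B be an even unimodular ℤ-lattice, let (V, φ) be the real quadratic space containing A = B(2) ⊕ II_{1,1} as a full-rank lattice, and let Â be the unique odd unimodular full-rank lattice in (V, φ) containing √2·A* (where A* is the dual lattice of A in V with respect to φ). Let Â^e = {x ∈ Â : φ(x,x) ∈ 2ℤ} be the even sublattice of Â. Then A = √2·((Â^e)*), where (Â^e)* is the dual lattice of Â^e in V with respect to φ. -/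
open Matrix

/-!
The lattice `Â` can be written down. In the coordinates of `V`, take the vectors `eᵢ/√2` of the
`B(2)` block together with `(e₀ + e₁)/√2` and `(e₀ - e₁)/√2` in the hyperbolic plane: their Gram
matrix is `B ⊕ I_{1,1}`, so they span an odd unimodular lattice, and it contains
`√2·A* = √2·(½ℤⁿ ⊕ ℤ²)`; by uniqueness it is `Â`. The vector with coordinates `c` has norm
`c_B·B·c_B + c₀² - c₁²`, so, `B` being even, `Âᵉ` is cut out by `c₀ ≡ c₁ (mod 2)`, and this is
exactly `√2·(½ℤⁿ ⊕ ℤ²)`. Hence `√2·(Âᵉ)* = (½ℤⁿ ⊕ ℤ²)* = ℤⁿ⁺² = A`.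
-/

section GramForm

variable {N : ℕ}

theorem gramBilinR_apply (G : Matrix (Fin N) (Fin N) ℤ) (x y : Fin N → ℝ) :
    gramBilinR G x y = ∑ i, ∑ j, x i * G i j * y j := by
  simp [gramBilinR, dotProduct, Matrix.mulVec, Finset.mul_sum, mul_assoc]

theorem gramBilinR_smul (c : ℤ) (G : Matrix (Fin N) (Fin N) ℤ) (x y : Fin N → ℝ) :
    gramBilinR (c • G) x y = c * gramBilinR G x y := by
  simp only [gramBilinR_apply, Finset.mul_sum, Matrix.smul_apply, smul_eq_mul, Int.cast_mul]
  exact Finset.sum_congr rfl fun i _ => Finset.sum_congr rfl fun j _ => by ring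

theorem gramBilinR_gramSum {n m : ℕ} (G : Matrix (Fin n) (Fin n) ℤ)
    (H : Matrix (Fin m) (Fin m) ℤ) (x y : Fin (n + m) → ℝ) :
    gramBilinR (gramSum G H) x y =
      gramBilinR G (fun i => x (Fin.castAdd m i)) (fun i => y (Fin.castAdd m i)) +
        gramBilinR H (fun j => x (Fin.natAdd n j)) (fun j => y (Fin.natAdd n j)) := by
  simp [gramBilinR_apply, gramSum, Fin.sum_univ_add]

theorem gramBilinR_gramII (x y : Fin 2 → ℝ) :
    gramBilinR gramII x y = x 0 * y 1 + x 1 * y 0 := by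
  simp [gramBilinR_apply, gramII, Fin.sum_univ_two]

theorem gramBilinR_gramI_one_one (x y : Fin 2 → ℝ) :
    gramBilinR (gramI 1 1) x y = x 0 * y 0 - x 1 * y 1 := by
  simp [gramBilinR_apply, gramI, Fin.sum_univ_two]
  ring

theorem gramBilinR_single_single (G : Matrix (Fin N) (Fin N) ℤ) (i j : Fin N) :
    gramBilinR G (Pi.single i 1) (Pi.single j 1) = G i j := by
  simp [gramBilinR_apply, Pi.single_apply]

theorem gramBilinR_intCast (G : Matrix (Fin N) (Fin N) ℤ) (u v : Fin N → ℤ) :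
    gramBilinR G (fun i => (u i : ℝ)) (fun i => (v i : ℝ)) = ((u ⬝ᵥ G *ᵥ v : ℤ) : ℝ) := by
  simp [gramBilinR_apply, dotProduct, Matrix.mulVec, Finset.mul_sum, mul_assoc]

theorem gramBilinR_single_right (G : Matrix (Fin N) (Fin N) ℤ) (x : Fin N → ℝ) (j : Fin N) (c : ℝ) :
    gramBilinR G x (Pi.single j c) = c * (x ᵥ* G.map (Int.cast : ℤ → ℝ)) j := by
  simp [gramBilinR_apply, Pi.single_apply, Matrix.vecMul, dotProduct, Finset.mul_sum]
  exact Finset.sum_congr rfl fun i _ => by ring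

end GramForm

section Lattices

variable {ι V : Type*} [Fintype ι] [DecidableEq ι] [AddCommGroup V] [Module ℝ V]

theorem mem_span_range_map_single_iff (f : (ι → ℝ) →ₗ[ℝ] V) (x : V) :
    x ∈ Submodule.span ℤ (Set.range fun i => f (Pi.single i 1)) ↔
      ∃ c : ι → ℤ, f (fun i => (c i : ℝ)) = x := by
  have h (c : ι → ℤ) : ∑ i, c i • f (Pi.single i 1) = f (fun i => (c i : ℝ)) := by
    simp only [← map_zsmul, ← map_sum]
    congr 1
    ext j
    simp [Finset.sum_apply, Pi.single_apply]
  simp only [Submodule.mem_span_range_iff_exists_fun, h]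

theorem mem_stdLat_iff {N : ℕ} (x : Fin N → ℝ) : x ∈ stdLat N ↔ ∀ i, ∃ k : ℤ, x i = k := by
  refine (mem_span_range_map_single_iff LinearMap.id x).trans ⟨?_, ?_⟩
  · rintro ⟨c, rfl⟩ i
    exact ⟨c i, rfl⟩
  · intro h
    choose c hc using h
    exact ⟨c, funext fun i => (hc i).symm⟩

theorem dualSet_image_smul (φ : V →ₗ[ℝ] V →ₗ[ℝ] ℝ) (S : Set V) {c : ℝ} (hc : c ≠ 0) :
    dualSet φ ((fun x => c • x) '' S) = (fun x => c⁻¹ • x) '' dualSet φ S := by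
  ext x
  constructor
  · intro h
    refine ⟨c • x, fun y hy => ?_, by simp [smul_smul, hc]⟩
    simpa using h (c • y) ⟨y, hy, rfl⟩
  · rintro ⟨x, hx, rfl⟩ - ⟨y, hy, rfl⟩
    simpa [smul_smul, hc] using hx y hy

end Lattices

theorem exists_int_of_vecMul {m : ℕ} (A : Matrix (Fin m) (Fin m) ℤ) (hA : IsUnit A.det)
    (w : Fin m → ℝ) (h : ∀ j, ∃ k : ℤ, (w ᵥ* A.map (Int.cast : ℤ → ℝ)) j = k) (i : Fin m) :
    ∃ k : ℤ, w i = k := by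
  choose c hc using h
  refine ⟨(c ᵥ* A⁻¹) i, ?_⟩
  have hA' : A.map (Int.cast : ℤ → ℝ) * (A⁻¹).map (Int.cast : ℤ → ℝ) = 1 := by
    calc _ = (A * A⁻¹).map (Int.castRingHom ℝ) := Matrix.map_mul.symm
      _ = 1 := by simp [Matrix.mul_nonsing_inv A hA]
  have hw : w = (w ᵥ* A.map (Int.cast : ℤ → ℝ)) ᵥ* (A⁻¹).map (Int.cast : ℤ → ℝ) := by
    rw [Matrix.vecMul_vecMul, hA', Matrix.vecMul_one]
  rw [hw, funext hc]
  simp [Matrix.vecMul, dotProduct]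

theorem Fin.castAdd_ne_natAdd {m k : ℕ} (i : Fin m) (j : Fin k) :
    Fin.castAdd k i ≠ Fin.natAdd m j := by
  simp only [ne_eq, Fin.ext_iff, Fin.val_castAdd, Fin.val_natAdd]
  omega

theorem Int.even_add_of_even_mul_self_sub {a b : ℤ} (h : Even (a * a - b * b)) :
    Even (a + b) := by
  rw [show a * a - b * b = (a + b) * (a - b) by ring, Int.even_mul] at h
  rcases h with h | ⟨r, hr⟩
  · exact h
  · exact ⟨r + b, by omega⟩

namespace PeriodLattice

variable {n : ℕ} (GB : Matrix (Fin n) (Fin n) ℤ)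

theorem form_apply (x y : Fin (n + 2) → ℝ) :
    gramBilinR (gramSum ((2 : ℤ) • GB) gramII) x y =
      2 * gramBilinR GB (fun i => x (Fin.castAdd 2 i)) (fun i => y (Fin.castAdd 2 i)) +
        (x (Fin.natAdd n 0) * y (Fin.natAdd n 1) + x (Fin.natAdd n 1) * y (Fin.natAdd n 0)) := by
  rw [gramBilinR_gramSum, gramBilinR_smul, gramBilinR_gramII]
  norm_num

theorem form_single_castAdd (x : Fin (n + 2) → ℝ) (j : Fin n) (c : ℝ) :
    gramBilinR (gramSum ((2 : ℤ) • GB) gramII) x (Pi.single (Fin.castAdd 2 j) c) =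
      2 * c * ((fun i => x (Fin.castAdd 2 i)) ᵥ* GB.map (Int.cast : ℤ → ℝ)) j := by
  have : (fun i => (Pi.single (Fin.castAdd 2 j) c : Fin (n + 2) → ℝ) (Fin.castAdd 2 i)) =
      Pi.single j c := by
    ext i; simp [Pi.single_apply]
  rw [form_apply, this, gramBilinR_single_right]
  simp [(Fin.castAdd_ne_natAdd _ _).symm]
  ring

theorem form_single_natAdd_zero (x : Fin (n + 2) → ℝ) :
    gramBilinR (gramSum ((2 : ℤ) • GB) gramII) x (Pi.single (Fin.natAdd n 0) 1) =
      x (Fin.natAdd n 1) := by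
  rw [form_apply]
  simp [Fin.castAdd_ne_natAdd, ← Pi.zero_def]

theorem form_single_natAdd_one (x : Fin (n + 2) → ℝ) :
    gramBilinR (gramSum ((2 : ℤ) • GB) gramII) x (Pi.single (Fin.natAdd n 1) 1) =
      x (Fin.natAdd n 0) := by
  rw [form_apply]
  simp [Fin.castAdd_ne_natAdd, ← Pi.zero_def]

def halfIntSum (n : ℕ) : Set (Fin (n + 2) → ℝ) :=
  {x | (∀ i, ∃ k : ℤ, 2 * x (Fin.castAdd 2 i) = k) ∧ ∀ j, ∃ k : ℤ, x (Fin.natAdd n j) = k}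

theorem single_castAdd_mem_halfIntSum (j : Fin n) :
    Pi.single (Fin.castAdd 2 j) (1 / 2 : ℝ) ∈ halfIntSum n := by
  refine ⟨fun i => ?_, fun k => ⟨0, by simp [(Fin.castAdd_ne_natAdd _ _).symm]⟩⟩
  by_cases h : i = j
  · exact ⟨1, by simp [h]⟩
  · exact ⟨0, by simp [h]⟩

theorem single_natAdd_mem_halfIntSum (j : Fin 2) :
    Pi.single (Fin.natAdd n j) (1 : ℝ) ∈ halfIntSum n := by
  refine ⟨fun i => ⟨0, by simp [Fin.castAdd_ne_natAdd]⟩, fun k => ?_⟩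
  by_cases h : k = j
  · exact ⟨1, by simp [h]⟩
  · exact ⟨0, by simp [h]⟩

variable {GB}

theorem dualSet_stdLat_subset (hunim : IsUnit GB.det) :
    dualSet (gramBilinR (gramSum ((2 : ℤ) • GB) gramII)) (stdLat (n + 2)) ⊆ halfIntSum n := by
  intro x hx
  have hpair (p : Fin (n + 2)) := hx _ (Submodule.subset_span ⟨p, rfl⟩)
  refine ⟨exists_int_of_vecMul GB hunim _ fun j => ?_, Fin.forall_fin_two.2 ⟨?_, ?_⟩⟩
  · have h2 : (fun i => 2 * x (Fin.castAdd 2 i)) = (2 : ℝ) • fun i => x (Fin.castAdd 2 i) := rfl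
    rw [h2, Matrix.smul_vecMul]
    simpa only [form_single_castAdd, mul_one, Pi.smul_apply, smul_eq_mul] using
      hpair (Fin.castAdd 2 j)
  · simpa only [form_single_natAdd_one] using hpair (Fin.natAdd n 1)
  · simpa only [form_single_natAdd_zero] using hpair (Fin.natAdd n 0)

theorem dualSet_halfIntSum (hunim : IsUnit GB.det) :
    dualSet (gramBilinR (gramSum ((2 : ℤ) • GB) gramII)) (halfIntSum n) = stdLat (n + 2) := by
  ext x
  rw [SetLike.mem_coe, mem_stdLat_iff, Fin.forall_fin_add, Fin.forall_fin_two]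
  constructor
  · intro hx
    refine ⟨exists_int_of_vecMul GB hunim _ fun j => ?_, ?_, ?_⟩
    · have hj := hx _ (single_castAdd_mem_halfIntSum j)
      rwa [form_single_castAdd, mul_one_div_cancel two_ne_zero, one_mul] at hj
    · simpa only [form_single_natAdd_one] using hx _ (single_natAdd_mem_halfIntSum 1)
    · simpa only [form_single_natAdd_zero] using hx _ (single_natAdd_mem_halfIntSum 0)
  · rintro ⟨hxB, ⟨a₀, ha₀⟩, ⟨a₁, ha₁⟩⟩ y ⟨hyB, hyr⟩
    choose u hu using hxB
    choose w hw using hyB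
    obtain ⟨b₀, hb₀⟩ := hyr 0
    obtain ⟨b₁, hb₁⟩ := hyr 1
    refine ⟨u ⬝ᵥ GB *ᵥ w + (a₀ * b₁ + a₁ * b₀), ?_⟩
    have hB : 2 * gramBilinR GB (fun i => x (Fin.castAdd 2 i)) (fun i => y (Fin.castAdd 2 i)) =
        gramBilinR GB (fun i => (u i : ℝ)) (fun i => (w i : ℝ)) := by
      rw [show (fun i => (u i : ℝ)) = fun i => x (Fin.castAdd 2 i) from funext fun i => (hu i).symm,
        show (fun i => (w i : ℝ)) = (2 : ℝ) • fun i => y (Fin.castAdd 2 i) from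
          funext fun i => (hw i).symm, map_smul, smul_eq_mul]
    rw [form_apply, hB, gramBilinR_intCast, ha₀, ha₁, hb₀, hb₁]
    push_cast
    ring

noncomputable def oddLatticeEquiv (n : ℕ) : (Fin (n + 2) → ℝ) ≃ₗ[ℝ] (Fin (n + 2) → ℝ) where
  toFun y := Fin.append (fun i => y (Fin.castAdd 2 i) / √2)
    ![(y (Fin.natAdd n 0) + y (Fin.natAdd n 1)) / √2,
      (y (Fin.natAdd n 0) - y (Fin.natAdd n 1)) / √2]
  invFun x := Fin.append (fun i => √2 * x (Fin.castAdd 2 i))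
    ![(x (Fin.natAdd n 0) + x (Fin.natAdd n 1)) / √2,
      (x (Fin.natAdd n 0) - x (Fin.natAdd n 1)) / √2]
  map_add' x y := by
    ext p
    induction p using Fin.addCases with
    | left i => simp [add_div]
    | right j => fin_cases j <;> simp <;> ring
  map_smul' c x := by
    ext p
    induction p using Fin.addCases with
    | left i => simp [mul_div_assoc]
    | right j => fin_cases j <;> simp <;> ring
  left_inv x := by
    ext p
    induction p using Fin.addCases with
    | left i => simp [mul_div_cancel₀]
    | right j => fin_cases j <;> simp <;> field_simp <;> simp [Real.sq_sqrt] <;> ring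
  right_inv x := by
    ext p
    induction p using Fin.addCases with
    | left i => simp
    | right j => fin_cases j <;> simp <;> field_simp <;> simp [Real.sq_sqrt] <;> ring

@[simp]
theorem oddLatticeEquiv_castAdd (y : Fin (n + 2) → ℝ) (i : Fin n) :
    oddLatticeEquiv n y (Fin.castAdd 2 i) = y (Fin.castAdd 2 i) / √2 := by
  simp [oddLatticeEquiv]

@[simp]
theorem oddLatticeEquiv_natAdd_zero (y : Fin (n + 2) → ℝ) :
    oddLatticeEquiv n y (Fin.natAdd n 0) = (y (Fin.natAdd n 0) + y (Fin.natAdd n 1)) / √2 := by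
  simp [oddLatticeEquiv]

@[simp]
theorem oddLatticeEquiv_natAdd_one (y : Fin (n + 2) → ℝ) :
    oddLatticeEquiv n y (Fin.natAdd n 1) = (y (Fin.natAdd n 0) - y (Fin.natAdd n 1)) / √2 := by
  simp [oddLatticeEquiv]

variable (GB) in
theorem form_oddLatticeEquiv (x y : Fin (n + 2) → ℝ) :
    gramBilinR (gramSum ((2 : ℤ) • GB) gramII) (oddLatticeEquiv n x) (oddLatticeEquiv n y) =
      gramBilinR (gramSum GB (gramI 1 1)) x y := by
  have hB (z : Fin (n + 2) → ℝ) : (fun i => oddLatticeEquiv n z (Fin.castAdd 2 i)) =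
      (√2)⁻¹ • fun i => z (Fin.castAdd 2 i) := by
    ext i
    simp [div_eq_inv_mul]
  rw [form_apply, gramBilinR_gramSum, gramBilinR_gramI_one_one, hB, hB]
  simp only [map_smul, LinearMap.smul_apply, smul_eq_mul, oddLatticeEquiv_natAdd_zero,
    oddLatticeEquiv_natAdd_one]
  field_simp
  simp [Real.sq_sqrt]
  ring

noncomputable def oddLatticeBasis (n : ℕ) : Module.Basis (Fin (n + 2)) ℝ (Fin (n + 2) → ℝ) :=
  (Pi.basisFun ℝ (Fin (n + 2))).map (oddLatticeEquiv n)

theorem oddLatticeBasis_apply (p : Fin (n + 2)) :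
    oddLatticeBasis n p = oddLatticeEquiv n (Pi.single p 1) := by
  simp [oddLatticeBasis]

def oddLattice (n : ℕ) : Submodule ℤ (Fin (n + 2) → ℝ) :=
  Submodule.span ℤ (Set.range (oddLatticeBasis n))

theorem mem_oddLattice_iff (x : Fin (n + 2) → ℝ) :
    x ∈ oddLattice n ↔ ∃ c : Fin (n + 2) → ℤ, oddLatticeEquiv n (fun p => (c p : ℝ)) = x := by
  rw [oddLattice, funext oddLatticeBasis_apply]
  exact mem_span_range_map_single_iff (oddLatticeEquiv n).toLinearMap x

theorem isOddUnimodularLat_oddLattice (hunim : IsUnit GB.det) :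
    IsOddUnimodularLat (gramBilinR (gramSum ((2 : ℤ) • GB) gramII)) (oddLattice n) := by
  have hgram (p q : Fin (n + 2)) :
      gramBilinR (gramSum ((2 : ℤ) • GB) gramII) (oddLatticeBasis n p) (oddLatticeBasis n q) =
        gramSum GB (gramI 1 1) p q := by
    rw [oddLatticeBasis_apply, oddLatticeBasis_apply, form_oddLatticeEquiv,
      gramBilinR_single_single]
  refine ⟨⟨n + 2, gramSum GB (gramI 1 1), ⟨oddLatticeBasis n, rfl, hgram⟩, ?_⟩, fun h => ?_⟩
  · simpa [gramSum, Matrix.det_fromBlocks_zero₂₁, gramI, Fin.prod_univ_two] using hunim.neg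
  · obtain ⟨k, hk⟩ := h _ (Submodule.subset_span ⟨Fin.natAdd n 0, rfl⟩)
    rw [hgram] at hk
    have : ((1 : ℤ) : ℝ) = ((2 * k : ℤ) : ℝ) := by simpa [gramSum, gramI] using hk
    have := Int.cast_injective this
    omega

theorem smul_halfIntSum_subset_oddLattice :
    (fun x => √2 • x) '' halfIntSum n ⊆ oddLattice n := by
  rintro - ⟨x, ⟨hxB, hxr⟩, rfl⟩
  choose u hu using hxB
  obtain ⟨a₀, ha₀⟩ := hxr 0
  obtain ⟨a₁, ha₁⟩ := hxr 1
  rw [SetLike.mem_coe, mem_oddLattice_iff]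
  refine ⟨Fin.append u ![a₀ + a₁, a₀ - a₁], ?_⟩
  ext p
  induction p using Fin.addCases with
  | left i =>
    simp only [oddLatticeEquiv_castAdd, Fin.append_left, ← hu, Pi.smul_apply, smul_eq_mul]
    field_simp
    simp only [Real.sq_sqrt zero_le_two]
    ring
  | right j =>
    fin_cases j <;> simp [ha₀, ha₁] <;> field_simp <;> ring_nf <;> simp

variable (GB) in
theorem even_add_of_form_oddLatticeEquiv_even (heven : EvenGram GB) (c : Fin (n + 2) → ℤ)
    (k : ℤ) (hk : gramBilinR (gramSum ((2 : ℤ) • GB) gramII) (oddLatticeEquiv n fun p => (c p : ℝ))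
      (oddLatticeEquiv n fun p => (c p : ℝ)) = 2 * k) :
    Even (c (Fin.natAdd n 0) + c (Fin.natAdd n 1)) := by
  obtain ⟨t, ht⟩ := heven fun i => c (Fin.castAdd 2 i)
  rw [form_oddLatticeEquiv, gramBilinR_gramSum, gramBilinR_gramI_one_one, gramBilinR_intCast,
    ht] at hk
  refine Int.even_add_of_even_mul_self_sub ⟨k - t, ?_⟩
  have : ((c (Fin.natAdd n 0) * c (Fin.natAdd n 0) - c (Fin.natAdd n 1) * c (Fin.natAdd n 1) :
      ℤ) : ℝ) = ((k - t + (k - t) : ℤ) : ℝ) := by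
    push_cast at hk ⊢
    linarith
  exact_mod_cast this

theorem inv_sqrt_two_smul_oddLatticeEquiv_mem_halfIntSum {c : Fin (n + 2) → ℤ}
    (hc : Even (c (Fin.natAdd n 0) + c (Fin.natAdd n 1))) :
    (√2)⁻¹ • oddLatticeEquiv n (fun p => (c p : ℝ)) ∈ halfIntSum n := by
  obtain ⟨s, hs⟩ := hc
  have hs' : (c (Fin.natAdd n 0) : ℝ) + c (Fin.natAdd n 1) = 2 * s := by
    rw [two_mul]
    exact_mod_cast hs
  refine ⟨fun i => ⟨c (Fin.castAdd 2 i), ?_⟩,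
    Fin.forall_fin_two.2 ⟨⟨s, ?_⟩, ⟨s - c (Fin.natAdd n 1), ?_⟩⟩⟩
  · simp only [Pi.smul_apply, oddLatticeEquiv_castAdd, smul_eq_mul]
    field_simp
    simp
  · simp only [Pi.smul_apply, oddLatticeEquiv_natAdd_zero, smul_eq_mul]
    field_simp
    simp
    linarith
  · simp only [Pi.smul_apply, oddLatticeEquiv_natAdd_one, smul_eq_mul]
    field_simp
    simp
    linarith

variable (GB) in
theorem form_sqrt_two_smul_even (heven : EvenGram GB) {y : Fin (n + 2) → ℝ}
    (hy : y ∈ halfIntSum n) :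
    ∃ k : ℤ, gramBilinR (gramSum ((2 : ℤ) • GB) gramII) (√2 • y) (√2 • y) = 2 * k := by
  obtain ⟨hyB, hyr⟩ := hy
  choose w hw using hyB
  obtain ⟨a₀, ha₀⟩ := hyr 0
  obtain ⟨a₁, ha₁⟩ := hyr 1
  obtain ⟨t, ht⟩ := heven w
  have hyB : (fun i => y (Fin.castAdd 2 i)) = (1 / 2 : ℝ) • fun i => (w i : ℝ) := by
    ext i
    simp [← hw i]
  refine ⟨t + 2 * a₀ * a₁, ?_⟩
  simp only [map_smul, LinearMap.smul_apply, smul_eq_mul]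
  rw [form_apply, hyB]
  simp only [map_smul, LinearMap.smul_apply, smul_eq_mul]
  rw [gramBilinR_intCast, ht, ha₀, ha₁]
  push_cast
  linear_combination ((t : ℝ) + 2 * a₀ * a₁) * Real.mul_self_sqrt (zero_le_two (α := ℝ))

variable (GB) in
theorem evenPart_oddLattice (heven : EvenGram GB) :
    {x | x ∈ oddLattice n ∧
        ∃ k : ℤ, gramBilinR (gramSum ((2 : ℤ) • GB) gramII) x x = 2 * (k : ℝ)} =
      (fun x => √2 • x) '' halfIntSum n := by
  ext x
  constructor
  · rintro ⟨hx, k, hk⟩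
    obtain ⟨c, rfl⟩ := (mem_oddLattice_iff x).1 hx
    exact ⟨_, inv_sqrt_two_smul_oddLatticeEquiv_mem_halfIntSum
      (even_add_of_form_oddLatticeEquiv_even GB heven c k hk), by simp [smul_smul]⟩
  · rintro ⟨y, hy, rfl⟩
    exact ⟨smul_halfIntSum_subset_oddLattice ⟨y, hy, rfl⟩, form_sqrt_two_smul_even GB heven hy⟩

end PeriodLattice

theorem period_lattice_stmt4_general {n : ℕ} (GB : Matrix (Fin n) (Fin n) ℤ)
    (heven : EvenGram GB) (hunim : IsUnit GB.det)
    (φ : (Fin (n + 2) → ℝ) →ₗ[ℝ] (Fin (n + 2) → ℝ) →ₗ[ℝ] ℝ)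
    (hφ : φ = gramBilinR (gramSum ((2 : ℤ) • GB) gramII))
    (Ahat : Submodule ℤ (Fin (n + 2) → ℝ))
    (huniq : ∀ M : Submodule ℤ (Fin (n + 2) → ℝ), IsOddUnimodularLat φ M →
      (fun x => Real.sqrt 2 • x) '' dualSet φ (stdLat (n + 2) : Set (Fin (n + 2) → ℝ))
        ⊆ (M : Set (Fin (n + 2) → ℝ)) → M = Ahat) :
    (stdLat (n + 2) : Set (Fin (n + 2) → ℝ)) =
      (fun x => Real.sqrt 2 • x) ''
        dualSet φ {x | x ∈ Ahat ∧ ∃ k : ℤ, φ x x = 2 * (k : ℝ)} := by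
  subst hφ
  have hAhat : PeriodLattice.oddLattice n = Ahat :=
    huniq _ (PeriodLattice.isOddUnimodularLat_oddLattice hunim)
      ((Set.image_mono (PeriodLattice.dualSet_stdLat_subset hunim)).trans
        PeriodLattice.smul_halfIntSum_subset_oddLattice)
  have hsqrt : √2 ≠ 0 := by positivity
  rw [← hAhat, PeriodLattice.evenPart_oddLattice GB heven, dualSet_image_smul _ _ hsqrt,
    PeriodLattice.dualSet_halfIntSum hunim, Set.image_image]
  simp [smul_smul, hsqrt]

/-- In the real quadratic space `(V, φ)` containing `A = B(2) ⊕ II_{1,1}`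
as the standard lattice, let `Ahat` be the unique odd unimodular full-rank lattice
containing `√2·A*`.  Then `A = √2·((Ahatᵉ)*)`, where `Ahatᵉ` is the even sublattice
of `Ahat`. -/
theorem period_lattice_stmt4 {n : ℕ} (GB : Matrix (Fin n) (Fin n) ℤ)
    (hsymm : GB.IsSymm) (heven : EvenGram GB) (hunim : IsUnit GB.det)
    (φ : (Fin (n + 2) → ℝ) →ₗ[ℝ] (Fin (n + 2) → ℝ) →ₗ[ℝ] ℝ)
    (hφ : φ = gramBilinR (gramSum ((2 : ℤ) • GB) gramII))
    (Ahat : Submodule ℤ (Fin (n + 2) → ℝ))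
    (hAhat : IsOddUnimodularLat φ Ahat)
    (hcont : (fun x => Real.sqrt 2 • x) '' dualSet φ (stdLat (n + 2) : Set (Fin (n + 2) → ℝ))
      ⊆ (Ahat : Set (Fin (n + 2) → ℝ)))
    (huniq : ∀ M : Submodule ℤ (Fin (n + 2) → ℝ), IsOddUnimodularLat φ M →
      (fun x => Real.sqrt 2 • x) '' dualSet φ (stdLat (n + 2) : Set (Fin (n + 2) → ℝ))
        ⊆ (M : Set (Fin (n + 2) → ℝ)) → M = Ahat) :
    (stdLat (n + 2) : Set (Fin (n + 2) → ℝ)) =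
      (fun x => Real.sqrt 2 • x) ''
        dualSet φ {x | x ∈ Ahat ∧ ∃ k : ℤ, φ x x = 2 * (k : ℝ)} :=
  period_lattice_stmt4_general GB heven hunim φ hφ Ahat huniq
end
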